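/- arXiv:2211.00117 — 4 statements merged into one kernel-verified Lean document; each statement's English description precedes it below -/
import Mathlib

section
/- Spectral gap of a connected weighted stochastic matrix: let L ≥ 2, let w₁,…,w_L > 0, and let m = (m_{ll'}) be a symmetric L×L matrix with nonnegative entries such that Σ_{l'} m_{ll'} = w_l for each l. Define the row-stochastic matrix B by B_{ll'} = m_{ll'}/w_l. Let 0 < δ ≤ 1 and assume: (a) m_{ll'} ≥ δ·√(w_l w_{l'}) whenever m_{ll'} > 0 (populated intersections); (b) the graph on {1,…,L} with edges {(l,l') : m_{ll'} > 0} is connected. Then for every x ∈ ℝ^L with x ≠ 0 and Σ_l w_l x_l = 0, if Bx = (1−ε)x for some ε ∈ ℝ, then ε ≥ δ^{2L}. -/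
namespace SpectralGapAux

/-- Existence of a walk of length exactly `k` in the weighted graph. -/
def walkP {L : ℕ} (m : Fin L → Fin L → ℝ) : ℕ → Fin L → Fin L → Prop
  | 0, a, b => a = b
  | (k+1), a, b => ∃ c, 0 < m a c ∧ walkP m k c b

lemma walkP_trans {L : ℕ} {m : Fin L → Fin L → ℝ} :
    ∀ {j k : ℕ} {a b c : Fin L}, walkP m j a b → walkP m k b c → walkP m (j + k) a c := by
  intro j
  induction j with
  | zero => intro k a b c h1 h2; cases h1; simpa using h2
  | succ n ih =>
    intro k a b c h1 h2
    obtain ⟨d, hd, hw⟩ := h1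
    rw [Nat.add_right_comm]
    exact ⟨d, hd, ih hw h2⟩

lemma walkP_add_two {L : ℕ} {m : Fin L → Fin L → ℝ} {k : ℕ} {a b c : Fin L}
    (h : walkP m k a b) (h1 : 0 < m b c) (h2 : 0 < m c b) :
    walkP m (k + 2) a b :=
  walkP_trans h ⟨c, h1, b, h2, rfl⟩

lemma walkP_add_even {L : ℕ} {m : Fin L → Fin L → ℝ} {k : ℕ} {a b c : Fin L}
    (h : walkP m k a b) (h1 : 0 < m b c) (h2 : 0 < m c b) :
    ∀ j : ℕ, walkP m (k + 2 * j) a b := by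
  intro j
  induction j with
  | zero => simpa using h
  | succ n ih =>
    have := walkP_add_two ih h1 h2
    have he : k + 2 * (n + 1) = k + 2 * n + 2 := by ring
    rwa [he]

lemma exists_ne_edge {α : Type*} {r : α → α → Prop} :
    ∀ {a b : α}, Relation.ReflTransGen r a b → a ≠ b → ∃ s t, s ≠ t ∧ r s t := by
  intro a b h
  induction h with
  | refl => intro h; exact absurd rfl h
  | @tail c d h1 step ih =>
    intro had
    by_cases hcd : c = d
    · exact ih (by rw [hcd]; exact had)
    · exact ⟨c, d, hcd, step⟩

lemma exists_exit {α : Type*} {r : α → α → Prop} {S : Set α} :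
    ∀ {a b : α}, Relation.ReflTransGen r a b → a ∈ S → b ∉ S →
      ∃ s t, s ∈ S ∧ t ∉ S ∧ r s t := by
  intro a b h
  induction h with
  | refl => intro h1 h2; exact absurd h1 h2
  | @tail c d h1 step ih =>
    intro ha hd
    by_cases hc : c ∈ S
    · exact ⟨c, d, hc, hd, step⟩
    · exact ih ha hc

variable {L : ℕ}

lemma pow_entries_nonneg (B : Matrix (Fin L) (Fin L) ℝ) (hB0 : ∀ a b, 0 ≤ B a b) :
    ∀ (k : ℕ) (a b : Fin L), 0 ≤ (B ^ k) a b := by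
  intro k
  induction k with
  | zero =>
    intro a b
    by_cases h : a = b
    · subst h; simp [Matrix.one_apply_eq]
    · simp [pow_zero, Matrix.one_apply_ne h]
  | succ n ih =>
    intro a b
    rw [pow_succ', Matrix.mul_apply]
    exact Finset.sum_nonneg fun c _ => mul_nonneg (hB0 a c) (ih c b)

lemma pow_row_sum (B : Matrix (Fin L) (Fin L) ℝ) (hBrow : ∀ a, ∑ b, B a b = 1) :
    ∀ (k : ℕ) (a : Fin L), ∑ b, (B ^ k) a b = 1 := by
  intro k
  induction k with
  | zero =>
    intro a
    simp [pow_zero, Matrix.one_apply, Finset.sum_ite_eq]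
  | succ n ih =>
    intro a
    have h1 : ∑ b, (B ^ (n+1)) a b = ∑ b, ∑ c, B a c * (B ^ n) c b := by
      simp [pow_succ', Matrix.mul_apply]
    rw [h1, Finset.sum_comm]
    have h2 : ∀ c : Fin L, ∑ b, B a c * (B ^ n) c b = B a c := by
      intro c
      rw [← Finset.mul_sum, ih c, mul_one]
    simp only [h2]
    exact hBrow a

lemma pow_eig (B : Matrix (Fin L) (Fin L) ℝ) (x : Fin L → ℝ) (lam : ℝ)
    (heig : ∀ a, ∑ b, B a b * x b = lam * x a) :
    ∀ (k : ℕ) (a : Fin L), ∑ b, (B ^ k) a b * x b = lam ^ k * x a := by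
  intro k
  induction k with
  | zero =>
    intro a
    simp [pow_zero, Matrix.one_apply, Finset.sum_ite_eq]
  | succ n ih =>
    intro a
    have h1 : ∑ b, (B ^ (n+1)) a b * x b = ∑ b, ∑ c, B a c * (B ^ n) c b * x b := by
      simp [pow_succ', Matrix.mul_apply, Finset.sum_mul]
    rw [h1, Finset.sum_comm]
    have h2 : ∀ c : Fin L, ∑ b, B a c * (B ^ n) c b * x b = B a c * (lam ^ n * x c) := by
      intro c
      rw [← ih c, Finset.mul_sum]
      simp [mul_assoc]
    simp only [h2]
    have h3 : ∑ c, B a c * (lam ^ n * x c) = lam ^ n * ∑ c, B a c * x c := by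
      rw [Finset.mul_sum]; congr 1; ext c; ring
    rw [h3, heig a, pow_succ]; ring

lemma pow_entry_lower (m : Fin L → Fin L → ℝ) (B : Matrix (Fin L) (Fin L) ℝ)
    (hB0 : ∀ a b, 0 ≤ B a b)
    (f : Fin L → ℝ) (hf : ∀ l, 0 < f l) (δ : ℝ) (hδ : 0 ≤ δ)
    (hedge : ∀ a c, 0 < m a c → δ * (f c / f a) ≤ B a c) :
    ∀ (k : ℕ) (a b : Fin L), walkP m k a b → δ ^ k * (f b / f a) ≤ (B ^ k) a b := by
  intro k
  induction k with
  | zero =>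
    intro a b hab
    cases hab
    simp [Matrix.one_apply_eq, div_self (hf a).ne']
  | succ n ih =>
    intro a b hab
    obtain ⟨c, hc, hw⟩ := hab
    have h1 : B a c * (B ^ n) c b ≤ (B ^ (n+1)) a b := by
      rw [pow_succ', Matrix.mul_apply]
      exact Finset.single_le_sum
        (fun i _ => mul_nonneg (hB0 a i) (pow_entries_nonneg B hB0 n i b))
        (Finset.mem_univ c)
    have h2 : δ * (f c / f a) * (δ ^ n * (f b / f c)) ≤ B a c * (B ^ n) c b :=
      mul_le_mul (hedge a c hc) (ih c b hw)
        (mul_nonneg (pow_nonneg hδ n) (div_pos (hf b) (hf c)).le) (hB0 a c)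
    have h3 : δ ^ (n+1) * (f b / f a) = δ * (f c / f a) * (δ ^ n * (f b / f c)) := by
      field_simp [(hf a).ne', (hf c).ne']
      ring
    rw [h3]
    exact h2.trans h1

lemma walk_toWalkP (m : Fin L → Fin L → ℝ) (G : SimpleGraph (Fin L))
    (hG : ∀ a b, G.Adj a b → 0 < m a b) :
    ∀ {u v : Fin L} (q : G.Walk u v), walkP m q.length u v := by
  intro u v q
  induction q with
  | nil => rfl
  | cons h p ih => exact ⟨_, hG _ _ h, ih⟩

lemma exists_short_walk (m : Fin L → Fin L → ℝ) (hmsym : ∀ a b, m a b = m b a)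
    (hconn : ∀ a b, Relation.ReflTransGen (fun a b => 0 < m a b) a b) :
    ∀ a b : Fin L, ∃ d, d < L ∧ walkP m d a b := by
  classical
  intro a b
  let G : SimpleGraph (Fin L) :=
    { Adj := fun u v => u ≠ v ∧ 0 < m u v
      symm := ⟨fun u v h => ⟨h.1.symm, by rw [hmsym]; exact h.2⟩⟩
      loopless := ⟨fun u h => h.1 rfl⟩ }
  have hreach : Relation.ReflTransGen G.Adj a b := by
    have h := hconn a b
    induction h with
    | refl => exact Relation.ReflTransGen.refl
    | @tail c d h1 step ih =>
      by_cases hcd : c = d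
      · subst hcd; exact ih
      · exact ih.tail ⟨hcd, step⟩
  have hR : G.Reachable a b := (SimpleGraph.reachable_iff_reflTransGen a b).mpr hreach
  obtain ⟨p⟩ := hR
  have hq : p.bypass.IsPath := SimpleGraph.Walk.bypass_isPath p
  have hlen : p.bypass.length < L := by
    have := hq.length_lt
    simpa using this
  exact ⟨p.bypass.length, hlen, walk_toWalkP m G (fun a b h => h.2) p.bypass⟩

lemma natkey_aux : ∀ k : ℕ, (2*k+7)^2 ≤ 2^(k+6) := by
  intro k
  induction k with
  | zero => norm_num
  | succ n ih =>
    have h1 : (2*(n+1)+7)^2 ≤ 2*(2*n+7)^2 := by nlinarith [sq_nonneg n, Nat.zero_le n]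
    calc (2*(n+1)+7)^2 ≤ 2*(2*n+7)^2 := h1
      _ ≤ 2*2^(n+6) := by omega
      _ = 2^(n+1+6) := by ring

lemma natkey {L : ℕ} (hL : 3 ≤ L) : (2*L-3)^2 ≤ 2^(L+1) := by
  obtain ⟨k, rfl⟩ : ∃ k, L = k + 3 := ⟨L - 3, by omega⟩
  rcases k with _ | _ | j
  · norm_num
  · norm_num
  · have := natkey_aux j
    have he : 2*(j+2+3)-3 = 2*j+7 := by omega
    rw [he]
    calc (2*j+7)^2 ≤ 2^(j+6) := this
      _ = 2^(j+2+3+1) := by ring_nf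

end SpectralGapAux

open SpectralGapAux in
set_option maxHeartbeats 1000000 in
/-- spectral gap of a connected weighted stochastic matrix: any eigenvalue
`1 − ε` of `B = (m_{ll'}/w_l)` on the `w`-weighted zero-mean hyperplane satisfies
`ε ≥ δ^{2L}`. -/
theorem stochastic_matrix_spectral_gap
    (L : ℕ) (hL : 2 ≤ L) (w : Fin L → ℝ) (hw : ∀ l, 0 < w l)
    (m : Fin L → Fin L → ℝ)
    (hm0 : ∀ l l', 0 ≤ m l l')
    (hmsym : ∀ l l', m l l' = m l' l)
    (hrow : ∀ l, ∑ l', m l l' = w l)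
    (δ : ℝ) (hδ0 : 0 < δ) (hδ1 : δ ≤ 1)
    (hpop : ∀ l l', 0 < m l l' → δ * Real.sqrt (w l * w l') ≤ m l l')
    (hconn : ∀ l l', Relation.ReflTransGen (fun a b => 0 < m a b) l l')
    (x : Fin L → ℝ) (hx : x ≠ 0) (hmean : ∑ l, w l * x l = 0)
    (ε : ℝ) (heig : ∀ l, ∑ l', m l l' / w l * x l' = (1 - ε) * x l) :
    δ ^ (2 * L) ≤ ε := by
  classical
  set lam : ℝ := 1 - ε with hlamdef
  set s : Fin L → ℝ := fun l => Real.sqrt (w l) with hsdef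
  have hs : ∀ l, 0 < s l := fun l => Real.sqrt_pos.mpr (hw l)
  have hss : ∀ l, s l * s l = w l := fun l => Real.mul_self_sqrt (hw l).le
  set W : ℝ := ∑ l, w l with hWdef
  have hW : 0 < W := Finset.sum_pos (fun l _ => hw l) ⟨⟨0, by omega⟩, Finset.mem_univ _⟩
  have hwleW : ∀ l, w l ≤ W := fun l =>
    Finset.single_le_sum (fun i _ => (hw i).le) (Finset.mem_univ l)
  set B : Matrix (Fin L) (Fin L) ℝ := Matrix.of (fun a b => m a b / w a) with hBdef
  have hBapp : ∀ a b, B a b = m a b / w a := fun a b => rfl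
  have hB0 : ∀ a b, 0 ≤ B a b := fun a b => div_nonneg (hm0 a b) (hw a).le
  have hBrow : ∀ a, ∑ b, B a b = 1 := by
    intro a
    rw [show ∑ b, B a b = ∑ b, m a b / w a from rfl, ← Finset.sum_div, hrow,
      div_self (hw a).ne']
  have hBeig : ∀ a, ∑ b, B a b * x b = lam * x a := fun a => heig a
  have hBedge : ∀ a c, 0 < m a c → δ * (s c / s a) ≤ B a c := by
    intro a c hac
    have h1 : δ * Real.sqrt (w a * w c) ≤ m a c := hpop a c hac
    have h2 : Real.sqrt (w a * w c) = s a * s c := Real.sqrt_mul (hw a).le _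
    rw [hBapp, le_div_iff₀ (hw a)]
    calc δ * (s c / s a) * w a = δ * (s c / s a) * (s a * s a) := by rw [hss]
      _ = δ * (s a * s c) := by field_simp [(hs a).ne']
      _ ≤ m a c := by rw [← h2]; exact h1
  have hnbr : ∀ b : Fin L, ∃ c, 0 < m b c := by
    intro b
    by_contra hno
    push_neg at hno
    have : ∑ c, m b c = 0 := Finset.sum_eq_zero fun c _ => le_antisymm (hno c) (hm0 b c)
    rw [hrow] at this
    exact (hw b).ne' this
  -- parity-corrected walks
  have hwalkK : ∀ a b : Fin L, ∃ k, (k = L - 2 ∨ k = L - 1) ∧ walkP m k a b := by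
    intro a b
    obtain ⟨d, hd, hwd⟩ := exists_short_walk m hmsym hconn a b
    obtain ⟨c, hc⟩ := hnbr b
    have hc' : 0 < m c b := by rw [hmsym c b]; exact hc
    by_cases hpar : (L - 1 - d) % 2 = 0
    · obtain ⟨j, hj⟩ : ∃ j, d + 2*j = L - 1 := ⟨(L-1-d)/2, by omega⟩
      exact ⟨L - 1, Or.inr rfl, hj ▸ walkP_add_even hwd hc hc' j⟩
    · obtain ⟨j, hj⟩ : ∃ j, d + 2*j = L - 2 := ⟨(L-2-d)/2, by omega⟩
      exact ⟨L - 2, Or.inl rfl, hj ▸ walkP_add_even hwd hc hc' j⟩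
  -- minorization constant
  set c : ℝ := δ ^ (L-1) / 2 with hcdef
  have hc_pos : 0 < c := by positivity
  have hkey : ∀ a b, c * (w b / W) ≤ ((B ^ (L-2)) a b + (B ^ (L-1)) a b) / 2 := by
    intro a b
    obtain ⟨k, hk, hwk⟩ := hwalkK a b
    have hlow : δ ^ k * (s b / s a) ≤ (B ^ k) a b :=
      pow_entry_lower m B hB0 s hs δ hδ0.le hBedge k a b hwk
    have hδk : δ ^ (L-1) ≤ δ ^ k := by
      apply pow_le_pow_of_le_one hδ0.le hδ1
      omega
    have hratio : w b / W ≤ s b / s a := by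
      rw [div_le_div_iff₀ hW (hs a)]
      have h1 : w b * s a = s b * (s b * s a) := by rw [← hss b]; ring
      have h2 : s b * s a ≤ W := by
        have h3 : (s b * s a) * (s b * s a) ≤ W * W := by
          calc (s b * s a) * (s b * s a) = w b * w a := by
                rw [← hss b, ← hss a]; ring
            _ ≤ W * W := mul_le_mul (hwleW b) (hwleW a) (hw a).le hW.le
        nlinarith [mul_pos (hs b) (hs a), hW]
      calc w b * s a = s b * (s b * s a) := h1
        _ ≤ s b * W := mul_le_mul_of_nonneg_left h2 (hs b).le
    have hk_le : (B ^ k) a b ≤ (B ^ (L-2)) a b + (B ^ (L-1)) a b := by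
      rcases hk with h | h <;> subst h
      · exact le_add_of_nonneg_right (pow_entries_nonneg B hB0 _ a b)
      · exact le_add_of_nonneg_left (pow_entries_nonneg B hB0 _ a b)
    calc c * (w b / W) = (δ ^ (L-1) * (w b / W)) / 2 := by rw [hcdef]; ring
      _ ≤ (δ ^ k * (s b / s a)) / 2 := by
          apply div_le_div_of_nonneg_right ?_ ?_
          · exact mul_le_mul hδk hratio (div_nonneg (hw b).le hW.le) (pow_nonneg hδ0.le k)
          · norm_num
      _ ≤ ((B ^ k) a b) / 2 := by linarith
      _ ≤ ((B ^ (L-2)) a b + (B ^ (L-1)) a b) / 2 := by linarith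
  -- the maximizer of |x|
  obtain ⟨a, _, ha⟩ := Finset.exists_max_image Finset.univ (fun l => |x l|)
    ⟨⟨0, by omega⟩, Finset.mem_univ _⟩
  have haM : ∀ b, |x b| ≤ |x a| := fun b => ha b (Finset.mem_univ b)
  have hM : 0 < |x a| := by
    rcases Function.ne_iff.mp hx with ⟨l, hl⟩
    calc (0:ℝ) < |x l| := abs_pos.mpr hl
      _ ≤ |x a| := haM l
  -- the Doeblin bound
  have hmu : (lam ^ (L-2) + lam ^ (L-1)) / 2 ≤ 1 - c := by
    set g : Fin L → ℝ :=
      fun b => ((B ^ (L-2)) a b + (B ^ (L-1)) a b) / 2 - c * (w b / W) with hgdef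
    have hg0 : ∀ b, 0 ≤ g b := fun b => sub_nonneg.mpr (hkey a b)
    have hgsum : ∑ b, g b = 1 - c := by
      have h1 : ∑ b, ((B ^ (L-2)) a b + (B ^ (L-1)) a b) / 2 = 1 := by
        rw [← Finset.sum_div, Finset.sum_add_distrib,
          pow_row_sum B hBrow, pow_row_sum B hBrow]
        norm_num
      have h2 : ∑ b, c * (w b / W) = c := by
        have : ∑ b, w b / W = 1 := by
          rw [← Finset.sum_div, ← hWdef, div_self hW.ne']
        rw [← Finset.mul_sum, this, mul_one]
      rw [show (∑ b, g b) = ∑ b, (((B ^ (L-2)) a b + (B ^ (L-1)) a b) / 2 - c * (w b / W))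
        from rfl, Finset.sum_sub_distrib, h1, h2]
    have hgx : ∑ b, g b * x b = ((lam ^ (L-2) + lam ^ (L-1)) / 2) * x a := by
      calc ∑ b, g b * x b
          = ∑ b, (((B ^ (L-2)) a b * x b + (B ^ (L-1)) a b * x b) / 2
              - (c/W) * (w b * x b)) :=
            Finset.sum_congr rfl (fun b _ => by simp only [hgdef]; ring)
        _ = (∑ b, (B ^ (L-2)) a b * x b + ∑ b, (B ^ (L-1)) a b * x b) / 2
              - (c/W) * (∑ b, w b * x b) := by
            rw [Finset.sum_sub_distrib, ← Finset.sum_div, Finset.sum_add_distrib,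
              ← Finset.mul_sum]
        _ = (lam ^ (L-2) * x a + lam ^ (L-1) * x a) / 2 - (c/W) * 0 := by
            rw [pow_eig B x lam hBeig, pow_eig B x lam hBeig, hmean]
        _ = ((lam ^ (L-2) + lam ^ (L-1)) / 2) * x a := by ring
    have habs : |((lam ^ (L-2) + lam ^ (L-1)) / 2) * x a| ≤ (1 - c) * |x a| := by
      rw [← hgx]
      calc |∑ b, g b * x b| ≤ ∑ b, |g b * x b| := Finset.abs_sum_le_sum_abs _ _
        _ = ∑ b, g b * |x b| := by
            congr 1; ext b; rw [abs_mul, abs_of_nonneg (hg0 b)]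
        _ ≤ ∑ b, g b * |x a| := Finset.sum_le_sum fun b _ =>
            mul_le_mul_of_nonneg_left (haM b) (hg0 b)
        _ = (1 - c) * |x a| := by rw [← Finset.sum_mul, hgsum]
    have h2 : (lam ^ (L-2) + lam ^ (L-1)) / 2 ≤ |(lam ^ (L-2) + lam ^ (L-1)) / 2| :=
      le_abs_self _
    have h3 : |(lam ^ (L-2) + lam ^ (L-1)) / 2| * |x a| ≤ (1 - c) * |x a| := by
      rw [← abs_mul]; exact habs
    have h4 : |(lam ^ (L-2) + lam ^ (L-1)) / 2| ≤ 1 - c :=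
      le_of_mul_le_mul_right (by linarith) hM
    linarith
  -- structural: for L ≥ 3, δ² ≤ 1/2
  have cherry : ∀ z u1 u2 : Fin L, u1 ≠ u2 → 0 < m z u1 → 0 < m z u2 → δ^2 ≤ 1/2 := by
    intro z u1 u2 hne h1 h2
    have hle : m z u1 + m z u2 ≤ w z := by
      rw [← hrow z]
      calc m z u1 + m z u2 = ∑ i ∈ ({u1, u2} : Finset (Fin L)), m z i :=
            (Finset.sum_pair hne).symm
        _ ≤ ∑ i, m z i := Finset.sum_le_sum_of_subset_of_nonneg
            (Finset.subset_univ _) (fun i _ _ => hm0 z i)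
    have hp1 : δ * (s z * s u1) ≤ m z u1 := by
      have := hpop z u1 h1; rwa [Real.sqrt_mul (hw z).le] at this
    have hp2 : δ * (s z * s u2) ≤ m z u2 := by
      have := hpop z u2 h2; rwa [Real.sqrt_mul (hw z).le] at this
    have hq1 : δ * s z ≤ s u1 := by
      have h1' : 0 < m u1 z := by rw [hmsym]; exact h1
      have ha1 : δ * (s u1 * s z) ≤ m u1 z := by
        have := hpop u1 z h1'; rwa [Real.sqrt_mul (hw u1).le] at this
      have ha2 : m u1 z ≤ w u1 := by
        rw [← hrow u1]
        exact Finset.single_le_sum (fun i _ => hm0 u1 i) (Finset.mem_univ z)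
      have ha3 : δ * (s u1 * s z) ≤ s u1 * s u1 := by rw [hss]; linarith
      nlinarith [hs u1, hs z]
    have hq2 : δ * s z ≤ s u2 := by
      have h2' : 0 < m u2 z := by rw [hmsym]; exact h2
      have ha1 : δ * (s u2 * s z) ≤ m u2 z := by
        have := hpop u2 z h2'; rwa [Real.sqrt_mul (hw u2).le] at this
      have ha2 : m u2 z ≤ w u2 := by
        rw [← hrow u2]
        exact Finset.single_le_sum (fun i _ => hm0 u2 i) (Finset.mem_univ z)
      have ha3 : δ * (s u2 * s z) ≤ s u2 * s u2 := by rw [hss]; linarith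
      nlinarith [hs u2, hs z]
    have hwz : s z * s z = w z := hss z
    have k1 : (δ*s z)*(δ*s z) ≤ (δ*s z) * s u1 :=
      mul_le_mul_of_nonneg_left hq1 (by positivity)
    have k2 : (δ*s z)*(δ*s z) ≤ (δ*s z) * s u2 :=
      mul_le_mul_of_nonneg_left hq2 (by positivity)
    have k3 : (δ*s z) * s u1 ≤ m z u1 := by
      calc (δ*s z) * s u1 = δ * (s z * s u1) := by ring
        _ ≤ m z u1 := hp1
    have k4 : (δ*s z) * s u2 ≤ m z u2 := by
      calc (δ*s z) * s u2 = δ * (s z * s u2) := by ring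
        _ ≤ m z u2 := hp2
    have e : (δ*s z)*(δ*s z) = δ^2 * w z := by rw [← hwz]; ring
    have k5 : 2*(δ^2 * w z) ≤ w z := by
      rw [← e]; linarith
    have k6 : (2*δ^2) * w z ≤ (1:ℝ) * w z := by linarith
    have k7 : 2*δ^2 ≤ 1 := le_of_mul_le_mul_right (by linarith) (hw z)
    linarith
  have hhalf : 3 ≤ L → δ^2 ≤ 1/2 := by
    intro hL3
    have h01 : (⟨0, by omega⟩ : Fin L) ≠ ⟨1, by omega⟩ := by simp [Fin.ext_iff]
    obtain ⟨p, q, hpq, hmpq⟩ :=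
      exists_ne_edge (hconn ⟨0, by omega⟩ ⟨1, by omega⟩) h01
    obtain ⟨r, hrp, hrq⟩ : ∃ r : Fin L, r ≠ p ∧ r ≠ q := by
      by_contra hno
      push_neg at hno
      have hsub : (Finset.univ : Finset (Fin L)) ⊆ {p, q} := by
        intro r _
        rcases eq_or_ne r p with h | h
        · simp [h]
        · simp [hno r h]
      have hcard : L ≤ 2 := by
        calc L = (Finset.univ : Finset (Fin L)).card := by simp
          _ ≤ ({p, q} : Finset (Fin L)).card := Finset.card_le_card hsub
          _ ≤ 2 := Finset.card_insert_le p {q} |>.trans (by simp)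
      omega
    obtain ⟨u, v, huS, hvS, hmuv⟩ :=
      exists_exit (S := {p, q}) (hconn p r)
        (by simp : p ∈ ({p, q} : Set (Fin L)))
        (by simp [hrp, hrq] : r ∉ ({p, q} : Set (Fin L)))
    have hvp : v ≠ p := fun h => hvS (by simp [h])
    have hvq : v ≠ q := fun h => hvS (by simp [h])
    rcases huS with h | h
    · subst h
      exact cherry u v q (fun h => hvq h) hmuv hmpq
    · simp at h
      subst h
      exact cherry u v p (fun h => hvp h) hmuv (by rw [hmsym]; exact hmpq)
  -- endgame
  rcases eq_or_lt_of_le hL with hL2 | hL3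
  · -- L = 2
    have hL2' : L = 2 := hL2.symm
    have hmu2 : (1 + lam)/2 ≤ 1 - δ/2 := by
      rw [show L-2 = 0 by omega, show L-1 = 1 by omega, pow_zero, pow_one,
        hcdef, show L-1 = 1 by omega, pow_one] at hmu
      exact hmu
    have hlamε : lam = 1 - ε := hlamdef
    have hεδ : δ ≤ ε := by linarith
    rw [show 2*L = 4 by omega]
    calc δ ^ 4 ≤ δ ^ 1 := pow_le_pow_of_le_one hδ0.le hδ1 (by norm_num)
      _ = δ := pow_one δ
      _ ≤ ε := hεδ
  · -- 3 ≤ L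
    have hL3' : 3 ≤ L := hL3
    have hh : δ^2 ≤ 1/2 := hhalf hL3'
    by_contra hlt
    push_neg at hlt
    set v : ℝ := δ^(2*L) with hvdef
    have hv0 : 0 < v := by positivity
    have hv8 : v ≤ 1/8 := by
      have e1 : v = (δ^2)^L := by rw [hvdef, ← pow_mul]
      have e2 : (δ^2)^L ≤ (1/2:ℝ)^L := pow_le_pow_left₀ (sq_nonneg δ) hh L
      have e3 : ((1:ℝ)/2)^L ≤ (1/2:ℝ)^3 :=
        pow_le_pow_of_le_one (by norm_num) (by norm_num) hL3'
      rw [e1]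
      calc (δ^2)^L ≤ (1/2:ℝ)^L := e2
        _ ≤ (1/2:ℝ)^3 := e3
        _ = 1/8 := by norm_num
    have hlam_gt : 1 - v < lam := by rw [hlamdef]; linarith
    have hlam_pos : 0 < lam := by linarith
    -- Bernoulli
    have hA : ((L:ℝ) - 2) = ((L-2 : ℕ) : ℝ) := by
      have : (2:ℕ) ≤ L := hL
      push_cast [Nat.cast_sub this]
      ring
    have hb : 1 - ((L:ℝ)-2) * v ≤ (1 - v)^(L-2) := by
      have hber := one_add_mul_le_pow (a := -v) (by linarith : (-2:ℝ) ≤ -v) (L-2)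
      rw [hA]
      calc 1 - ((L-2:ℕ):ℝ) * v = 1 + ((L-2:ℕ):ℝ) * (-v) := by ring
        _ ≤ (1 + -v)^(L-2) := hber
        _ = (1 - v)^(L-2) := by ring_nf
    -- key: (2L-3)·v ≤ δ^(L-1)
    have hLR3 : (3:ℝ) ≤ (L:ℝ) := by exact_mod_cast hL3'
    have hq0 : (0:ℝ) ≤ 2*(L:ℝ) - 3 := by linarith
    have hkey2 : (2*(L:ℝ)-3) * v ≤ δ^(L-1) := by
      have hsplit : δ^(2*L) = δ^(L-1) * δ^(L+1) := by
        rw [← pow_add]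
        congr 1
        omega
      have hnat : (((2*L-3:ℕ)):ℝ)^2 ≤ (2:ℝ)^(L+1) := by
        exact_mod_cast natkey hL3'
      have hcast : (((2*L-3:ℕ)):ℝ) = 2*(L:ℝ)-3 := by
        have h3L : (3:ℕ) ≤ 2*L := by omega
        push_cast [Nat.cast_sub h3L]
        ring
      have hsq : ((2*(L:ℝ)-3) * δ^(L+1))^2 ≤ 1 := by
        have e1 : ((2*(L:ℝ)-3) * δ^(L+1))^2 = (2*(L:ℝ)-3)^2 * (δ^2)^(L+1) := by
          rw [mul_pow, ← pow_mul, ← pow_mul]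
          ring_nf
        have e2 : ((δ:ℝ)^2)^(L+1) ≤ (1/2:ℝ)^(L+1) := pow_le_pow_left₀ (sq_nonneg δ) hh _
        have e3 : (2*(L:ℝ)-3)^2 ≤ (2:ℝ)^(L+1) := by rw [← hcast]; exact hnat
        calc ((2*(L:ℝ)-3) * δ^(L+1))^2 = (2*(L:ℝ)-3)^2 * (δ^2)^(L+1) := e1
          _ ≤ (2:ℝ)^(L+1) * (1/2:ℝ)^(L+1) := by
              apply mul_le_mul e3 e2 (by positivity) (by positivity)
          _ = ((2:ℝ)*(1/2))^(L+1) := by rw [mul_pow]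
          _ = 1 := by norm_num
      have hq : (2*(L:ℝ)-3) * δ^(L+1) ≤ 1 := by
        by_contra hq1
        push_neg at hq1
        have h11 : (1:ℝ)*1 < ((2*(L:ℝ)-3) * δ^(L+1)) * ((2*(L:ℝ)-3) * δ^(L+1)) :=
          mul_lt_mul hq1 hq1.le (by norm_num) (by linarith)
        have h12 : ((2*(L:ℝ)-3) * δ^(L+1))^2 = ((2*(L:ℝ)-3) * δ^(L+1)) * ((2*(L:ℝ)-3) * δ^(L+1)) := sq _
        linarith [hsq]
      calc (2*(L:ℝ)-3)*v = δ^(L-1) * ((2*(L:ℝ)-3) * δ^(L+1)) := by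
            rw [hvdef, hsplit]; ring
        _ ≤ δ^(L-1) * 1 := mul_le_mul_of_nonneg_left hq (pow_nonneg hδ0.le _)
        _ = δ^(L-1) := mul_one _
    -- rewrite hmu
    have hL12 : L - 1 = (L - 2) + 1 := by omega
    have hmu' : lam^(L-2) * (1 + lam) / 2 ≤ 1 - c := by
      have e : lam^(L-1) = lam^(L-2) * lam := by rw [hL12, pow_succ]
      calc lam^(L-2) * (1 + lam) / 2 = (lam^(L-2) + lam^(L-2) * lam) / 2 := by ring
        _ = (lam^(L-2) + lam^(L-1)) / 2 := by rw [e]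
        _ ≤ 1 - c := hmu
    -- lower bound chain
    have hP0 : (0:ℝ) < (1-v)^(L-2) := pow_pos (by linarith) _
    have h5 : (1 - v)^(L-2) ≤ lam^(L-2) := pow_le_pow_left₀ (by linarith) hlam_gt.le _
    have h6 : (1-v)^(L-2) * (1 + (1-v)) < lam^(L-2) * (1 + lam) := by
      calc (1-v)^(L-2) * (1 + (1-v)) < (1-v)^(L-2) * (1 + lam) := by
            apply mul_lt_mul_of_pos_left (by linarith) hP0
        _ ≤ lam^(L-2) * (1 + lam) := by
            apply mul_le_mul_of_nonneg_right h5 (by linarith)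
    have hlhs : 1 - c < lam^(L-2) * (1 + lam) / 2 := by
      have s1 : 1 - c = 1 - δ^(L-1)/2 := by rw [hcdef]
      have s2 : 1 - δ^(L-1)/2 ≤ 1 - (2*(L:ℝ)-3)*v/2 := by linarith
      have s3 : 1 - (2*(L:ℝ)-3)*v/2 ≤ (1 - ((L:ℝ)-2)*v) * (2-v) / 2 := by
        nlinarith [mul_nonneg (mul_nonneg (by linarith : (0:ℝ) ≤ (L:ℝ)-2) hv0.le) hv0.le]
      have s4 : (1 - ((L:ℝ)-2)*v) * (2-v) / 2 ≤ (1-v)^(L-2) * (2-v) / 2 := by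
        nlinarith [hb, hv8]
      have s5 : (1-v)^(L-2) * (2-v) / 2 < lam^(L-2) * (1 + lam) / 2 := by
        have e : (1-v)^(L-2) * (2-v) = (1-v)^(L-2) * (1 + (1-v)) := by ring
        rw [e]
        exact (div_lt_div_iff_of_pos_right (by norm_num : (0:ℝ) < 2)).mpr h6
      linarith
    linarith
end

section
/- Lyapunov lemma for fat-tail alignment (core of the Cucker–Smale theorem): let φ : [0,∞) → (0,∞) be a continuous nonincreasing function with ∫₀^∞ φ(r) dr = ∞. Let D, A : [0,∞) → [0,∞) be locally Lipschitz functions satisfying, for almost every t ≥ 0, D'(t) ≤ A(t) and A'(t) ≤ −φ(D(t))·A(t). Then there exists D̄ < ∞, determined by the initial data via ∫_{D(0)}^{D̄} φ(r) dr = A(0), such that D(t) ≤ D̄ for all t ≥ 0, and consequently A(t) ≤ A(0)·e^{−φ(D̄) t} for all t ≥ 0. -/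
open MeasureTheory Filter

open intervalIntegral Topology

section helpers

lemma key_le {f : ℝ → ℝ} {a b : ℝ} (hab : a ≤ b) {K : NNReal}
    (hf : LipschitzOnWith K f (Set.Icc a (b + 1)))
    (hd : ∀ᵐ t ∂(volume.restrict (Set.Ioo a b)), deriv f t ≤ 0) :
    f b ≤ f a := by
  rcases eq_or_lt_of_le hab with rfl | hab
  · exact le_refl _
  set u : ℕ → ℝ := fun n => ((n : ℝ) + 1)⁻¹ with hu_def
  have hu0 : ∀ n, 0 < u n := fun n => by positivity
  have hu1 : ∀ n, u n ≤ 1 := fun n => by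
    rw [hu_def, inv_le_one_iff₀]
    right; linarith [Nat.cast_nonneg (α := ℝ) n]
  have hu : Tendsto u atTop (𝓝 0) := by
    simpa [hu_def, one_div] using tendsto_one_div_add_atTop_nhds_zero_nat (𝕜 := ℝ)
  have fcont : ContinuousOn f (Set.Icc a (b + 1)) := hf.continuousOn
  have hfi : ∀ c d : ℝ, c ∈ Set.Icc a (b+1) → d ∈ Set.Icc a (b+1) →
      IntervalIntegrable f volume c d := fun c d hc hd =>
    (fcont.mono (Set.uIcc_subset_Icc hc hd)).intervalIntegrable
  -- the difference quotient
  set g : ℕ → ℝ → ℝ := fun n t => (f (t + u n) - f t) / u n with hg_def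
  -- Claim A: integral identity
  have claimA : ∀ n, (∫ t in a..b, g n t) =
      ((∫ t in b..(b + u n), f t) - ∫ t in a..(a + u n), f t) / u n := by
    intro n
    have h1 : a + u n ∈ Set.Icc a (b+1) := ⟨by linarith [hu0 n], by linarith [hu1 n]⟩
    have h2 : b + u n ∈ Set.Icc a (b+1) := ⟨by linarith [hu0 n], by linarith [hu1 n]⟩
    have ha' : a ∈ Set.Icc a (b+1) := ⟨le_refl _, by linarith⟩
    have hb' : b ∈ Set.Icc a (b+1) := ⟨hab.le, by linarith⟩
    have hint1 : IntervalIntegrable (fun t => f (t + u n)) volume a b := by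
      simpa using (hfi _ _ h1 h2).comp_add_right (u n)
    rw [hg_def]
    simp only []
    rw [intervalIntegral.integral_div]
    congr 1
    rw [intervalIntegral.integral_sub hint1 (hfi _ _ ha' hb'),
      intervalIntegral.integral_comp_add_right]
    have e1 : (∫ t in a..(b + u n), f t) = (∫ t in a..(a + u n), f t) +
        ∫ t in (a + u n)..(b + u n), f t :=
      (intervalIntegral.integral_add_adjacent_intervals (hfi _ _ ha' h1) (hfi _ _ h1 h2)).symm
    have e2 : (∫ t in a..(b + u n), f t) = (∫ t in a..b, f t) +
        ∫ t in b..(b + u n), f t :=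
      (intervalIntegral.integral_add_adjacent_intervals (hfi _ _ ha' hb') (hfi _ _ hb' h2)).symm
    have := e1.symm.trans e2
    linarith
  -- Claim B: endpoint averages converge
  have claimB : ∀ c : ℝ, c ∈ Set.Icc a b →
      Tendsto (fun n => (∫ t in c..(c + u n), f t) / u n) atTop (𝓝 (f c)) := by
    intro c hc
    have hc1 : c ∈ Set.Icc a (b+1) := ⟨hc.1, by linarith [hc.2]⟩
    have hdiff : Tendsto (fun n => (∫ t in c..(c + u n), f t) / u n - f c) atTop (𝓝 0) := by
      apply squeeze_zero_norm (a := fun n => (K : ℝ) * u n)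
      · intro n
        have hcu : c + u n ∈ Set.Icc a (b+1) := ⟨by linarith [hc.1, hu0 n], by linarith [hc.2, hu1 n]⟩
        have e3 : (∫ t in c..(c + u n), f t) / u n - f c
            = (∫ t in c..(c + u n), (f t - f c)) / u n := by
          rw [intervalIntegral.integral_sub (hfi _ _ hc1 hcu) intervalIntegrable_const,
            intervalIntegral.integral_const]
          rw [add_sub_cancel_left, smul_eq_mul, sub_div, mul_div_cancel_left₀ _ (hu0 n).ne']
        rw [e3, norm_div]
        rw [div_le_iff₀ (by simpa using (hu0 n).ne')]
        have hbound : ∀ x ∈ Set.uIoc c (c + u n), ‖f x - f c‖ ≤ (K : ℝ) * u n := by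
          intro x hx
          rw [Set.uIoc_of_le (by linarith [hu0 n])] at hx
          have hx1 : x ∈ Set.Icc a (b+1) := ⟨by linarith [hx.1.le, hc.1], by linarith [hx.2, hcu.2]⟩
          have := hf.norm_sub_le hx1 hc1
          calc ‖f x - f c‖ ≤ (K : ℝ) * ‖x - c‖ := this
            _ ≤ (K : ℝ) * u n := by
                gcongr
                rw [Real.norm_eq_abs, abs_le]
                constructor <;> [linarith [hx.1.le, hu0 n]; linarith [hx.2]]
        calc ‖∫ t in c..(c + u n), (f t - f c)‖ ≤ ((K : ℝ) * u n) * |c + u n - c| :=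
              intervalIntegral.norm_integral_le_of_norm_le_const hbound
          _ = (K : ℝ) * u n * ‖u n‖ := by rw [add_sub_cancel_left, Real.norm_eq_abs]
      · simpa using (tendsto_const_nhds (x := (K : ℝ))).mul hu
    have := hdiff.add (tendsto_const_nhds (x := f c))
    simpa using this
  -- a.e. differentiability and derivative bound on Ioc
  have hrad := hf.ae_differentiableWithinAt_of_mem (μ := volume)
  have h2 : ∀ᵐ t ∂(volume.restrict (Set.Ioo a b)),
      DifferentiableAt ℝ f t ∧ deriv f t ≤ 0 := by
    filter_upwards [ae_restrict_of_ae hrad, ae_restrict_mem measurableSet_Ioo, hd]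
      with t h ht hd'
    refine ⟨?_, hd'⟩
    have hdw : DifferentiableWithinAt ℝ f (Set.Icc a (b+1)) t :=
      h ⟨ht.1.le, by linarith [ht.2]⟩
    exact hdw.differentiableAt (Icc_mem_nhds (by linarith [ht.1]) (by linarith [ht.2]))
  rw [Measure.restrict_congr_set Ioo_ae_eq_Ioc] at h2
  -- Claim C: dominated convergence
  have hmem : ∀ n, ∀ t ∈ Set.Ioc a b, t ∈ Set.Icc a (b+1) ∧ t + u n ∈ Set.Icc a (b+1) := by
    intro n t ht
    exact ⟨⟨ht.1.le, by linarith [ht.2]⟩, ⟨by linarith [ht.1.le, hu0 n], by linarith [ht.2, hu1 n]⟩⟩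
  have claimC : Tendsto (fun n => ∫ t in Set.Ioc a b, g n t) atTop
      (𝓝 (∫ t in Set.Ioc a b, deriv f t)) := by
    apply tendsto_integral_of_dominated_convergence (bound := fun _ => (K : ℝ))
    · intro n
      have hcont : ContinuousOn (g n) (Set.Ioc a b) := by
        apply ContinuousOn.div_const
        apply ContinuousOn.sub
        · apply fcont.comp (Continuous.continuousOn (by continuity))
          intro t ht
          exact (hmem n t ht).2
        · exact fcont.mono (fun t ht => (hmem n t ht).1)
      exact hcont.aestronglyMeasurable measurableSet_Ioc
    · exact integrableOn_const measure_Ioc_lt_top.ne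
    · intro n
      rw [ae_restrict_iff' measurableSet_Ioc]
      refine Eventually.of_forall (fun t ht => ?_)
      have hb' := hf.norm_sub_le (hmem n t ht).2 (hmem n t ht).1
      rw [hg_def]
      simp only [norm_div]
      rw [div_le_iff₀ (by simpa using (hu0 n).ne')]
      calc ‖f (t + u n) - f t‖ ≤ (K : ℝ) * ‖t + u n - t‖ := hb'
        _ = (K : ℝ) * ‖u n‖ := by rw [add_sub_cancel_left]
    · filter_upwards [h2] with t ht
      have hda := ht.1.hasDerivAt
      rw [hasDerivAt_iff_tendsto_slope] at hda
      have hseq : Tendsto (fun n => t + u n) atTop (𝓝[≠] t) := by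
        apply tendsto_nhdsWithin_of_tendsto_nhds_of_eventually_within
        · simpa using (tendsto_const_nhds (x := t)).add hu
        · exact Eventually.of_forall (fun n => by
            simp only [Set.mem_compl_iff, Set.mem_singleton_iff]
            intro h
            nlinarith [hu0 n, congrArg (· - t) h])
      have := hda.comp hseq
      apply this.congr
      intro n
      simp [Function.comp, slope_def_field, hg_def]
  -- assemble the two limits
  have lim1 : Tendsto (fun n => ∫ t in a..b, g n t) atTop (𝓝 (f b - f a)) := by
    have hB := (claimB b ⟨hab.le, le_refl b⟩).sub (claimB a ⟨le_refl a, hab.le⟩)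
    apply hB.congr
    intro n
    rw [claimA n, sub_div]
  have lim2 : Tendsto (fun n => ∫ t in a..b, g n t) atTop
      (𝓝 (∫ t in Set.Ioc a b, deriv f t)) := by
    have : (fun n => ∫ t in a..b, g n t) = fun n => ∫ t in Set.Ioc a b, g n t := by
      funext n
      exact intervalIntegral.integral_of_le hab.le
    rw [this]
    exact claimC
  have heq : f b - f a = ∫ t in Set.Ioc a b, deriv f t := tendsto_nhds_unique lim1 lim2
  have hle : (∫ t in Set.Ioc a b, deriv f t) ≤ 0 := by
    apply integral_nonpos_of_ae
    filter_upwards [h2] with t ht using ht.2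
  linarith


lemma lip_add {f g : ℝ → ℝ} {s : Set ℝ} {Kf Kg : NNReal}
    (hf : LipschitzOnWith Kf f s) (hg : LipschitzOnWith Kg g s) :
    LipschitzOnWith (Kf + Kg) (fun x => f x + g x) s := by
  apply LipschitzOnWith.of_dist_le_mul
  intro x hx y hy
  have h1 := hf.dist_le_mul x hx y hy
  have h2 := hg.dist_le_mul x hx y hy
  simp only [Real.dist_eq] at *
  push_cast
  calc |f x + g x - (f y + g y)| = |(f x - f y) + (g x - g y)| := by ring_nf
    _ ≤ |f x - f y| + |g x - g y| := abs_add_le _ _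
    _ ≤ (Kf : ℝ) * |x - y| + (Kg : ℝ) * |x - y| := add_le_add h1 h2
    _ = ((Kf : ℝ) + Kg) * |x - y| := by ring

lemma lip_mul {f g : ℝ → ℝ} {s : Set ℝ} {Kf Kg : NNReal} {Bf Bg : ℝ}
    (hf : LipschitzOnWith Kf f s) (hg : LipschitzOnWith Kg g s)
    (hBf : ∀ x ∈ s, |f x| ≤ Bf) (hBg : ∀ x ∈ s, |g x| ≤ Bg) :
    ∃ K : NNReal, LipschitzOnWith K (fun x => f x * g x) s := by
  refine ⟨Real.toNNReal (Bf * Kg + Bg * Kf), ?_⟩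
  apply LipschitzOnWith.of_dist_le_mul
  intro x hx y hy
  have h1 := hf.dist_le_mul x hx y hy
  have h2 := hg.dist_le_mul x hx y hy
  simp only [Real.dist_eq] at *
  have hb1 := hBf x hx
  have hb2 := hBg y hy
  have habs1 := abs_nonneg (f x - f y)
  have habs2 := abs_nonneg (g x - g y)
  have hxy := abs_nonneg (x - y)
  have key : |f x * g x - f y * g y| ≤ (Bf * Kg + Bg * Kf) * |x - y| := by
    calc |f x * g x - f y * g y| = |f x * (g x - g y) + g y * (f x - f y)| := by ring_nf
      _ ≤ |f x * (g x - g y)| + |g y * (f x - f y)| := abs_add_le _ _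
      _ = |f x| * |g x - g y| + |g y| * |f x - f y| := by rw [abs_mul, abs_mul]
      _ ≤ Bf * ((Kg : ℝ) * |x - y|) + Bg * ((Kf : ℝ) * |x - y|) := by
          apply add_le_add <;> apply mul_le_mul <;>
            first
              | assumption
              | positivity
              | exact le_trans (abs_nonneg _) (by assumption)
      _ = (Bf * Kg + Bg * Kf) * |x - y| := by ring
  calc |f x * g x - f y * g y| ≤ (Bf * Kg + Bg * Kf) * |x - y| := key
    _ ≤ (Real.toNNReal (Bf * Kg + Bg * Kf) : ℝ) * |x - y| := by
        gcongr
        exact Real.le_coe_toNNReal _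
end helpers

/-- Lyapunov lemma for fat-tail alignment: if `D' ≤ A` and
`A' ≤ -φ(D) A` a.e. on `[0,∞)` for locally Lipschitz `D, A ≥ 0` and a fat-tail kernel `φ`,
then the diameter stays bounded by `D̄` with `∫_{D(0)}^{D̄} φ = A(0)`, and the amplitude
decays exponentially at rate `φ(D̄)`. -/
theorem lyapunov_fat_tail_alignment
    (φ : ℝ → ℝ) (hφc : ContinuousOn φ (Set.Ici 0))
    (hφpos : ∀ r ∈ Set.Ici (0 : ℝ), 0 < φ r)
    (hφanti : AntitoneOn φ (Set.Ici 0))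
    (hφfat : Tendsto (fun R => ∫ r in (0 : ℝ)..R, φ r) atTop atTop)
    (D A : ℝ → ℝ)
    (hD0 : ∀ t ≥ (0 : ℝ), 0 ≤ D t) (hA0 : ∀ t ≥ (0 : ℝ), 0 ≤ A t)
    (hDlip : ∀ R > (0 : ℝ), ∃ K : NNReal, LipschitzOnWith K D (Set.Icc 0 R))
    (hAlip : ∀ R > (0 : ℝ), ∃ K : NNReal, LipschitzOnWith K A (Set.Icc 0 R))
    (hode : ∀ᵐ t ∂(volume.restrict (Set.Ici (0 : ℝ))),
      deriv D t ≤ A t ∧ deriv A t ≤ -φ (D t) * A t) :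
    ∃ Dbar : ℝ, (∫ r in (D 0)..Dbar, φ r) = A 0 ∧
      (∀ t ≥ (0 : ℝ), D t ≤ Dbar) ∧
      (∀ t ≥ (0 : ℝ), A t ≤ A 0 * Real.exp (-φ Dbar * t)) := by
  -- extended kernel
  set ψ : ℝ → ℝ := fun x => φ (max x 0) with hψ_def
  have hψcont : Continuous ψ :=
    hφc.comp_continuous (continuous_id.max continuous_const) (fun x => le_max_right x 0)
  have hψpos : ∀ x, 0 < ψ x := fun x => hφpos _ (le_max_right x 0)
  have hψeq : ∀ x, 0 ≤ x → ψ x = φ x := fun x hx => by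
    rw [hψ_def]; simp only [max_eq_left hx]
  have hψle : ∀ x, ψ x ≤ φ 0 := fun x =>
    hφanti (le_refl (0:ℝ)) (le_max_right x 0) (le_max_right x 0)
  -- primitive of the kernel
  set G : ℝ → ℝ := fun x => ∫ r in (0:ℝ)..x, ψ r with hG_def
  have hGderiv : ∀ x, HasDerivAt G (ψ x) x := by
    intro x
    exact intervalIntegral.integral_hasDerivAt_right
      (hψcont.intervalIntegrable _ _)
      (hψcont.stronglyMeasurable.stronglyMeasurableAtFilter)
      hψcont.continuousAt
  have hGmono : StrictMono G := by
    apply strictMono_of_deriv_pos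
    intro x
    rw [(hGderiv x).deriv]
    exact hψpos x
  have hGsub : ∀ c d : ℝ, G d - G c = ∫ r in c..d, ψ r := by
    intro c d
    rw [hG_def]
    exact intervalIntegral.integral_interval_sub_left
      (hψcont.intervalIntegrable _ _) (hψcont.intervalIntegrable _ _)
  have hKg0 : (0:ℝ) ≤ φ 0 := (hφpos 0 Set.self_mem_Ici).le
  set Kg : NNReal := ⟨φ 0, hKg0⟩ with hKg_def
  have hGlip : LipschitzWith Kg G := by
    apply LipschitzWith.of_dist_le_mul
    intro x y
    rw [Real.dist_eq, Real.dist_eq, hGsub y x]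
    have hnorm := intervalIntegral.norm_integral_le_of_norm_le_const
      (C := φ 0) (f := ψ) (a := y) (b := x) (fun r _ => by
        rw [Real.norm_eq_abs, abs_of_pos (hψpos r)]; exact hψle r)
    have : |∫ r in y..x, ψ r| ≤ φ 0 * |x - y| := by
      simpa [Real.norm_eq_abs] using hnorm
    exact this
  -- construct Dbar
  have hD00 : 0 ≤ D 0 := hD0 0 le_rfl
  have hA00 : 0 ≤ A 0 := hA0 0 le_rfl
  have hGtop : Tendsto G atTop atTop := by
    apply hφfat.congr'
    filter_upwards [eventually_ge_atTop (0:ℝ)] with R hR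
    apply intervalIntegral.integral_congr
    intro r hr
    rw [Set.uIcc_of_le hR] at hr
    exact (hψeq r hr.1).symm
  obtain ⟨b, hb1, hb2⟩ := ((hGtop.eventually_ge_atTop (A 0 + G (D 0))).and
    (eventually_ge_atTop (D 0))).exists
  have hmid : A 0 + G (D 0) ∈ Set.Icc (G (D 0)) (G b) := ⟨by linarith, hb1⟩
  obtain ⟨Dbar, hDbarmem, hGDbar⟩ :=
    intermediate_value_Icc hb2 (hGlip.continuous.continuousOn) hmid
  have hDbar0 : 0 ≤ Dbar := le_trans hD00 hDbarmem.1
  have hpart1 : (∫ r in (D 0)..Dbar, φ r) = A 0 := by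
    have e1 : (∫ r in (D 0)..Dbar, φ r) = ∫ r in (D 0)..Dbar, ψ r := by
      apply intervalIntegral.integral_congr
      intro r hr
      rw [Set.uIcc_of_le hDbarmem.1] at hr
      exact (hψeq r (le_trans hD00 hr.1)).symm
    rw [e1, ← hGsub, hGDbar]
    ring
  -- a.e. good points
  have hgood : ∀ T : ℝ, 0 < T → ∀ᵐ s ∂(volume.restrict (Set.Ioo 0 T)),
      s ∈ Set.Ioo 0 T ∧ DifferentiableAt ℝ D s ∧ DifferentiableAt ℝ A s ∧
      0 ≤ D s ∧ 0 ≤ A s ∧ deriv D s ≤ A s ∧ deriv A s ≤ -φ (D s) * A s := by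
    intro T hT
    obtain ⟨KD, hKD⟩ := hDlip (T+1) (by linarith)
    obtain ⟨KA, hKA⟩ := hAlip (T+1) (by linarith)
    have radD := hKD.ae_differentiableWithinAt_of_mem (μ := volume)
    have radA := hKA.ae_differentiableWithinAt_of_mem (μ := volume)
    have hodeT : ∀ᵐ s ∂(volume.restrict (Set.Ioo 0 T)),
        deriv D s ≤ A s ∧ deriv A s ≤ -φ (D s) * A s :=
      ae_restrict_of_ae_restrict_of_subset (fun s hs => hs.1.le) hode
    filter_upwards [ae_restrict_of_ae radD, ae_restrict_of_ae radA,
      ae_restrict_mem measurableSet_Ioo, hodeT] with s hD' hA' hs hode'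
    have hsm : s ∈ Set.Icc (0:ℝ) (T+1) := ⟨hs.1.le, by linarith [hs.2]⟩
    have hnb : Set.Icc (0:ℝ) (T+1) ∈ 𝓝 s := Icc_mem_nhds hs.1 (by linarith [hs.2])
    exact ⟨hs, (hD' hsm).differentiableAt hnb, (hA' hsm).differentiableAt hnb,
      hD0 s hs.1.le, hA0 s hs.1.le, hode'.1, hode'.2⟩
  -- Part 2 : boundedness of the diameter
  have hpart2 : ∀ t ≥ (0:ℝ), D t ≤ Dbar := by
    intro t ht
    rcases eq_or_lt_of_le ht with rfl | ht
    · exact hDbarmem.1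
    · set L : ℝ → ℝ := fun s => A s + G (D s) with hL_def
      obtain ⟨KD, hKD⟩ := hDlip (t+1) (by linarith)
      obtain ⟨KA, hKA⟩ := hAlip (t+1) (by linarith)
      have hLlip : LipschitzOnWith (KA + Kg * KD) L (Set.Icc 0 (t+1)) :=
        lip_add hKA (hGlip.comp_lipschitzOnWith hKD)
      have hLd : ∀ᵐ s ∂(volume.restrict (Set.Ioo 0 t)), deriv L s ≤ 0 := by
        filter_upwards [hgood t ht] with s hsdata
        obtain ⟨hs, hDd, hAd, hDs0, hAs0, h1, h2⟩ := hsdata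
        have hGD : HasDerivAt (fun x => G (D x)) (ψ (D s) * deriv D s) s :=
          (hGderiv (D s)).comp s hDd.hasDerivAt
        have hLder : HasDerivAt L (deriv A s + ψ (D s) * deriv D s) s :=
          hAd.hasDerivAt.add hGD
        rw [hLder.deriv, hψeq _ hDs0]
        have hφDpos : 0 < φ (D s) := hφpos _ hDs0
        nlinarith
      have hkey : L t ≤ L 0 := key_le ht.le hLlip hLd
      have hGt : G (D t) ≤ G Dbar := by
        have h1 : G (D t) ≤ L t := by
          rw [hL_def]; simp only []; linarith [hA0 t ht.le]
        have h2 : L 0 = G Dbar := by rw [hL_def]; simp only []; rw [hGDbar]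
        linarith
      exact hGmono.le_iff_le.1 hGt
  -- Part 3 : exponential decay
  have hc : 0 < φ Dbar := hφpos _ hDbar0
  set c : ℝ := φ Dbar with hc_def
  have hpart3 : ∀ t ≥ (0:ℝ), A t ≤ A 0 * Real.exp (-c * t) := by
    intro t ht
    rcases eq_or_lt_of_le ht with rfl | ht
    · simp
    · set M : ℝ → ℝ := fun s => A s * Real.exp (c * s) with hM_def
      obtain ⟨KA, hKA⟩ := hAlip (t+1) (by linarith)
      have hElip : LipschitzOnWith (Real.toNNReal (c * Real.exp (c * (t+1))))
          (fun s => Real.exp (c * s)) (Set.Icc 0 (t+1)) := by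
        apply (convex_Icc (0:ℝ) (t+1)).lipschitzOnWith_of_nnnorm_hasDerivWithin_le
          (f' := fun x => Real.exp (c * x) * c)
        · intro x _
          exact (((Real.hasDerivAt_exp (c*x)).comp x
            (by simpa using (hasDerivAt_id x).const_mul c)).hasDerivWithinAt).congr_deriv
            (by ring)
        · intro x hx
          rw [← NNReal.coe_le_coe, coe_nnnorm, Real.norm_eq_abs,
            Real.coe_toNNReal _ (by positivity)]
          rw [abs_of_nonneg (by positivity)]
          have hee : Real.exp (c*x) ≤ Real.exp (c*(t+1)) :=
            Real.exp_le_exp.2 (by nlinarith [hx.2])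
          nlinarith [Real.exp_pos (c*x)]
      obtain ⟨C, hC⟩ := (isCompact_Icc (a := (0:ℝ)) (b := t+1)).exists_bound_of_continuousOn
        hKA.continuousOn
      have hBA : ∀ x ∈ Set.Icc (0:ℝ) (t+1), |A x| ≤ max C 0 := fun x hx =>
        le_trans (by simpa [Real.norm_eq_abs] using hC x hx) (le_max_left _ _)
      have hEbound : ∀ x ∈ Set.Icc (0:ℝ) (t+1), |Real.exp (c*x)| ≤ Real.exp (c*(t+1)) :=
        fun x hx => by
          rw [abs_of_pos (Real.exp_pos _)]
          exact Real.exp_le_exp.2 (by nlinarith [hx.2])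
      obtain ⟨KM, hKM⟩ := lip_mul hKA hElip hBA hEbound
      have hMd : ∀ᵐ s ∂(volume.restrict (Set.Ioo 0 t)), deriv M s ≤ 0 := by
        filter_upwards [hgood t ht] with s hsdata
        obtain ⟨hs, hDd, hAd, hDs0, hAs0, h1, h2⟩ := hsdata
        have hE : HasDerivAt (fun x => Real.exp (c * x)) (Real.exp (c * s) * c) s := by
          have := (Real.hasDerivAt_exp (c*s)).comp s
            (by simpa using (hasDerivAt_id s).const_mul c)
          exact this
        have hM : HasDerivAt M (deriv A s * Real.exp (c*s) + A s * (Real.exp (c*s) * c)) s :=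
          hAd.hasDerivAt.mul hE
        rw [hM.deriv]
        have hDsle : D s ≤ Dbar := hpart2 s hs.1.le
        have hφge : c ≤ φ (D s) := hφanti hDs0 hDbar0 hDsle
        have hda : deriv A s ≤ -c * A s := le_trans h2 (by nlinarith)
        nlinarith [Real.exp_pos (c*s)]
      have hfin : M t ≤ M 0 := key_le ht.le hKM hMd
      have hM0 : M 0 = A 0 := by rw [hM_def]; simp
      have hMt : A t * Real.exp (c*t) ≤ A 0 := by rw [← hM0]; exact hfin
      calc A t = A t * Real.exp (c*t) * Real.exp (-(c*t)) := by
            rw [mul_assoc, ← Real.exp_add]; simp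
        _ ≤ A 0 * Real.exp (-(c*t)) :=
            mul_le_mul_of_nonneg_right hMt (Real.exp_pos _).le
        _ = A 0 * Real.exp (-c * t) := by ring_nf
  exact ⟨Dbar, hpart1, hpart2, hpart3⟩
end

section
/- Cucker–Smale flocking for systems with kernel bounded below by a fat-tail kernel: let n, N ∈ ℕ, m₁,…,m_N > 0, and let φ : [0,∞) → (0,∞) be continuous, nonincreasing, with ∫₀^∞ φ(r) dr = ∞. Let x_i, v_i : [0,∞) → ℝⁿ (i = 1,…,N) be C¹ solutions of x_i' = v_i, v_i' = Σ_{j=1}^N m_j φ_{ij}(t)(v_j − v_i), where φ_{ij} : [0,∞) → [0,∞) are continuous and satisfy φ_{ij}(t) ≥ φ(|x_i(t) − x_j(t)|) for all i, j, t. Then there exist constants C, δ > 0 (depending on the initial data, the masses, and φ) such that for all t ≥ 0: max_{i,j} |x_i(t) − x_j(t)| ≤ C and max_{i,j} |v_i(t) − v_j(t)| ≤ C e^{−δ t}; moreover there exists u_∞ ∈ ℝⁿ such that max_i |v_i(t) − u_∞| ≤ C e^{−δ t}. -/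
open Filter


open Filter Set Topology

lemma tendsto_finset_sup'' {ι α : Type*} {l : Filter α} [l.NeBot] (s : Finset ι) (hs : s.Nonempty)
    (F : ι → α → ℝ) (L : ι → ℝ) (h : ∀ i ∈ s, Tendsto (F i) l (𝓝 (L i))) :
    Tendsto (fun t => s.sup' hs (fun i => F i t)) l (𝓝 (s.sup' hs L)) := by
  revert h
  induction hs using Finset.Nonempty.cons_induction with
  | singleton i =>
      intro h
      simpa using h i (by simp)
  | cons i s hi hne ih =>
      intro h
      simp only [Finset.sup'_cons hne]
      exact (h i (by simp)).max (ih (fun j hj => h j (Finset.mem_cons_of_mem hj)))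

/-- Right-derivative of a finite sup of right-differentiable functions: some index attaining
the sup also gives the right derivative. -/
lemma hasDerivWithinAt_finset_sup' {ι : Type*} (s : Finset ι) (hs : s.Nonempty)
    (g : ι → ℝ → ℝ) (d : ι → ℝ) (x : ℝ)
    (hg : ∀ i ∈ s, HasDerivWithinAt (g i) (d i) (Ici x) x) :
    ∃ i ∈ s, g i x = s.sup' hs (fun j => g j x) ∧
      HasDerivWithinAt (fun t => s.sup' hs (fun j => g j t)) (d i) (Ici x) x := by
  classical
  set f : ℝ → ℝ := fun t => s.sup' hs (fun j => g j t) with hf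
  set A : Finset ι := s.filter (fun i => g i x = f x) with hA
  obtain ⟨i1, hi1s, hi1⟩ := Finset.exists_mem_eq_sup' hs (fun j => g j x)
  have hAne : A.Nonempty := ⟨i1, Finset.mem_filter.2 ⟨hi1s, hi1.symm⟩⟩
  obtain ⟨i0, hi0A, hi0⟩ := Finset.exists_mem_eq_sup' hAne d
  have hi0s : i0 ∈ s := (Finset.mem_filter.1 hi0A).1
  have hi0x : g i0 x = f x := (Finset.mem_filter.1 hi0A).2
  refine ⟨i0, hi0s, hi0x, ?_⟩
  -- eventually, f t = A.sup' (g · t)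
  have hev : ∀ᶠ t in 𝓝[Ici x] x, f t = A.sup' hAne (fun j => g j t) := by
    have hev1 : ∀ᶠ t in 𝓝[Ici x] x, ∀ j ∈ s, j ∉ A → g j t < g i0 t := by
      rw [Filter.eventually_all_finset]
      intro j hj
      by_cases hjA : j ∈ A
      · exact Filter.Eventually.of_forall (fun t h2 => absurd hjA h2)
      · have hjx : g j x < g i0 x := by
          rw [hi0x]
          rcases lt_or_eq_of_le (Finset.le_sup' (fun k => g k x) hj) with h | h
          · exact h
          · exact absurd (Finset.mem_filter.2 ⟨hj, h⟩) hjA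
        have hc1 : ContinuousWithinAt (g j) (Ici x) x := (hg j hj).continuousWithinAt
        have hc2 : ContinuousWithinAt (g i0) (Ici x) x := (hg i0 hi0s).continuousWithinAt
        have hpos0 : (0:ℝ) < g i0 x - g j x := by linarith
        have := (hc2.sub hc1).eventually_const_lt hpos0
        filter_upwards [this] with t ht
        intro _
        simp only [Pi.sub_apply] at ht
        linarith
    filter_upwards [hev1] with t ht
    apply le_antisymm
    · apply Finset.sup'_le
      intro j hj
      by_cases hjA : j ∈ A
      · exact Finset.le_sup' (fun k => g k t) hjA
      · exact le_trans (ht j hj hjA).le (Finset.le_sup' (fun k => g k t) hi0A)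
    · exact Finset.sup'_le _ _ (fun j hj => Finset.le_sup' (fun k => g k t) ((Finset.mem_filter.1 hj).1))
  -- pass to slopes
  rw [hasDerivWithinAt_iff_tendsto_slope]
  have hIoi : (Ici x) \ {x} = Ioi x := Set.Ici_sdiff_left
  rw [hIoi]
  have hslope : ∀ j ∈ A, Tendsto (slope (g j) x) (𝓝[Ioi x] x) (𝓝 (d j)) := by
    intro j hj
    have := (hg j (Finset.mem_filter.1 hj).1)
    rw [hasDerivWithinAt_iff_tendsto_slope, hIoi] at this
    exact this
  have hmain : Tendsto (fun t => A.sup' hAne (fun j => slope (g j) x t)) (𝓝[Ioi x] x)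
      (𝓝 (A.sup' hAne d)) := tendsto_finset_sup'' A hAne _ d hslope
  rw [← hi0]
  apply hmain.congr'
  filter_upwards [nhdsWithin_mono x Set.Ioi_subset_Ici_self hev, self_mem_nhdsWithin]
    with t ht htx
  have hpos : (0:ℝ) < t - x := sub_pos.2 htx
  have hmono : Monotone (fun y : ℝ => (t - x)⁻¹ * (y - f x)) := by
    intro a b hab
    have h0 : (0:ℝ) ≤ (t - x)⁻¹ := le_of_lt (inv_pos.2 hpos)
    exact mul_le_mul_of_nonneg_left (by linarith) h0
  have hF := Finset.comp_sup'_eq_sup'_comp (f := fun j => g j t) hAne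
    (fun y : ℝ => (t - x)⁻¹ * (y - f x)) (fun a b => hmono.map_max)
  calc A.sup' hAne (fun j => slope (g j) x t)
      = A.sup' hAne (fun j => (t - x)⁻¹ * (g j t - f x)) := by
        apply Finset.sup'_congr hAne rfl
        intro j hj
        rw [slope_def_field, div_eq_inv_mul, (Finset.mem_filter.1 hj).2]
    _ = (t - x)⁻¹ * (A.sup' hAne (fun j => g j t) - f x) := hF.symm
    _ = slope f x t := by rw [slope_def_field, div_eq_inv_mul, ht]
open Filter Set Topology

/-- Right derivative of the norm of a right-differentiable curve. -/
lemma norm_hasDerivWithinAt {E : Type*} [NormedAddCommGroup E] [InnerProductSpace ℝ E]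
    {w : ℝ → E} {w' : E} {x : ℝ} (h : HasDerivWithinAt w w' (Ici x) x) :
    ∃ d : ℝ, HasDerivWithinAt (fun t => ‖w t‖) d (Ici x) x ∧
      ((w x = 0 ∧ d = ‖w'‖) ∨ (w x ≠ 0 ∧ d = (inner ℝ (w x) w' : ℝ) / ‖w x‖)) := by
  by_cases hw : w x = 0
  · refine ⟨‖w'‖, ?_, Or.inl ⟨hw, rfl⟩⟩
    rw [hasDerivWithinAt_iff_tendsto_slope, Set.Ici_sdiff_left]
    have hsl : Tendsto (slope w x) (𝓝[>] x) (𝓝 w') := by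
      have := h
      rw [hasDerivWithinAt_iff_tendsto_slope, Set.Ici_sdiff_left] at this
      exact this
    have := (continuous_norm.tendsto w').comp hsl
    apply this.congr'
    filter_upwards [self_mem_nhdsWithin] with t (ht : t ∈ Ioi x)
    have hpos : (0:ℝ) < t - x := sub_pos.2 ht
    simp only [Function.comp_apply, slope_def_module, hw, sub_zero]
    rw [norm_smul, Real.norm_eq_abs, abs_inv, abs_of_pos hpos]
    simp [div_eq_inv_mul]
  · refine ⟨(inner ℝ (w x) w' : ℝ) / ‖w x‖, ?_, Or.inr ⟨hw, rfl⟩⟩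
    have h1 : HasDerivWithinAt (fun t => (inner ℝ (w t) (w t) : ℝ))
        ((inner ℝ (w x) w' : ℝ) + (inner ℝ w' (w x) : ℝ)) (Ici x) x := h.inner ℝ h
    have hpos : (0:ℝ) < (inner ℝ (w x) (w x) : ℝ) := by
      rw [real_inner_self_eq_norm_sq]
      exact pow_pos (norm_pos_iff.2 hw) 2
    have h2 : HasDerivAt Real.sqrt (1 / (2 * Real.sqrt (inner ℝ (w x) (w x) : ℝ)))
        (inner ℝ (w x) (w x) : ℝ) := Real.hasDerivAt_sqrt (ne_of_gt hpos)
    have h3 := h2.comp_hasDerivWithinAt x h1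
    have heq : (fun t => ‖w t‖) = (fun t => Real.sqrt (inner ℝ (w t) (w t) : ℝ)) := by
      funext t
      rw [real_inner_self_eq_norm_sq, Real.sqrt_sq (norm_nonneg _)]
    rw [heq]
    refine h3.congr_deriv ?_
    symm
    rw [real_inner_self_eq_norm_sq, Real.sqrt_sq (norm_nonneg _), real_inner_comm (w x) w']
    have : ‖w x‖ ≠ 0 := norm_ne_zero_iff.2 hw
    field_simp
    ring

/-- A continuous function with nonpositive right derivatives is bounded by its initial value. -/
lemma le_initial_of_rightDeriv_nonpos {f : ℝ → ℝ} {a b : ℝ}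
    (hf : ContinuousOn f (Icc a b))
    (h : ∀ t ∈ Ico a b, ∃ d, HasDerivWithinAt f d (Ici t) t ∧ d ≤ 0) :
    ∀ t ∈ Icc a b, f t ≤ f a := by
  intro t ht
  refine image_le_of_liminf_slope_right_le_deriv_boundary (B := fun _ => f a) (B' := fun _ => 0)
    hf le_rfl continuousOn_const (fun s _ => hasDerivWithinAt_const s _ (f a)) ?_ ht
  intro s hs r hr
  obtain ⟨d, hd, hd0⟩ := h s hs
  exact hd.liminf_right_slope_le (lt_of_le_of_lt hd0 hr)


set_option maxHeartbeats 1000000 in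
/-- Cucker–Smale flocking for agent-based systems whose communication
coefficients dominate a fat-tail kernel: the flock has bounded diameter, velocities align
exponentially fast, and converge exponentially fast to a limiting velocity. -/
theorem cucker_smale_fat_tail_flocking
    (n N : ℕ) (hN : 1 ≤ N)
    (m : Fin N → ℝ) (hm : ∀ i, 0 < m i)
    (φ : ℝ → ℝ) (hφc : ContinuousOn φ (Set.Ici 0))
    (hφpos : ∀ r ∈ Set.Ici (0 : ℝ), 0 < φ r)
    (hφanti : AntitoneOn φ (Set.Ici 0))
    (hφfat : Tendsto (fun R => ∫ r in (0 : ℝ)..R, φ r) atTop atTop)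
    (x v : Fin N → ℝ → EuclideanSpace ℝ (Fin n))
    (φij : Fin N → Fin N → ℝ → ℝ)
    (hφijc : ∀ i j, ContinuousOn (φij i j) (Set.Ici 0))
    (hφij0 : ∀ i j, ∀ t ≥ (0 : ℝ), 0 ≤ φij i j t)
    (hφijφ : ∀ i j, ∀ t ≥ (0 : ℝ), φ (‖x i t - x j t‖) ≤ φij i j t)
    (hx : ∀ i, ∀ t ≥ (0 : ℝ), HasDerivWithinAt (x i) (v i t) (Set.Ici 0) t)
    (hv : ∀ i, ∀ t ≥ (0 : ℝ), HasDerivWithinAt (v i)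
      (∑ j, (m j * φij i j t) • (v j t - v i t)) (Set.Ici 0) t) :
    ∃ C > (0 : ℝ), ∃ δ > (0 : ℝ), ∃ uinf : EuclideanSpace ℝ (Fin n),
      ∀ t ≥ (0 : ℝ),
        (∀ i j, ‖x i t - x j t‖ ≤ C) ∧
        (∀ i j, ‖v i t - v j t‖ ≤ C * Real.exp (-δ * t)) ∧
        (∀ i, ‖v i t - uinf‖ ≤ C * Real.exp (-δ * t)) := by
  classical
  haveI : Nonempty (Fin N) := ⟨⟨0, hN⟩⟩
  set M : ℝ := ∑ i, m i with hMdef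
  have hM : 0 < M := Finset.sum_pos (fun i _ => hm i) Finset.univ_nonempty
  have hPne : (Finset.univ : Finset (Fin N × Fin N)).Nonempty := Finset.univ_nonempty
  have hQne : (Finset.univ : Finset (Fin N)).Nonempty := Finset.univ_nonempty
  set Dd : ℝ → ℝ := fun t => Finset.univ.sup' hPne (fun p : Fin N × Fin N =>
    ‖x p.1 t - x p.2 t‖) with hDdef
  set Vv : ℝ → ℝ := fun t => Finset.univ.sup' hPne (fun p : Fin N × Fin N =>
    ‖v p.1 t - v p.2 t‖) with hVdef
  have hDle : ∀ (τ : ℝ) (i j : Fin N), ‖x i τ - x j τ‖ ≤ Dd τ := fun τ i j =>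
    Finset.le_sup' (fun p : Fin N × Fin N => ‖x p.1 τ - x p.2 τ‖) (Finset.mem_univ (i, j))
  have hVle : ∀ (τ : ℝ) (i j : Fin N), ‖v i τ - v j τ‖ ≤ Vv τ := fun τ i j =>
    Finset.le_sup' (fun p : Fin N × Fin N => ‖v p.1 τ - v p.2 τ‖) (Finset.mem_univ (i, j))
  obtain ⟨i0⟩ := (inferInstance : Nonempty (Fin N))
  have hD0 : ∀ τ, 0 ≤ Dd τ := fun τ => (norm_nonneg _).trans (hDle τ i0 i0)
  have hV0 : ∀ τ, 0 ≤ Vv τ := fun τ => (norm_nonneg _).trans (hVle τ i0 i0)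
  have hxc : ∀ i, ContinuousOn (x i) (Ici 0) := fun i τ hτ => (hx i τ hτ).continuousWithinAt
  have hvc : ∀ i, ContinuousOn (v i) (Ici 0) := fun i τ hτ => (hv i τ hτ).continuousWithinAt
  have hDc : ContinuousOn Dd (Ici 0) :=
    ContinuousOn.finset_sup'_apply hPne (fun p _ => ((hxc p.1).sub (hxc p.2)).norm)
  have hVc : ContinuousOn Vv (Ici 0) :=
    ContinuousOn.finset_sup'_apply hPne (fun p _ => ((hvc p.1).sub (hvc p.2)).norm)
  -- right-derivative bound for the position diameter
  have KeyD : ∀ t ∈ Ici (0:ℝ), ∃ d, HasDerivWithinAt Dd d (Ici t) t ∧ d ≤ Vv t := by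
    intro t ht
    have hder : ∀ p : Fin N × Fin N, ∃ d,
        HasDerivWithinAt (fun τ => ‖x p.1 τ - x p.2 τ‖) d (Ici t) t ∧
        d ≤ ‖v p.1 t - v p.2 t‖ := by
      intro p
      have hw : HasDerivWithinAt (fun τ => x p.1 τ - x p.2 τ) (v p.1 t - v p.2 t) (Ici t) t :=
        ((hx p.1 t ht).mono (Ici_subset_Ici.2 ht)).sub ((hx p.2 t ht).mono (Ici_subset_Ici.2 ht))
      obtain ⟨d, hd, hcase⟩ := norm_hasDerivWithinAt hw
      refine ⟨d, hd, ?_⟩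
      rcases hcase with ⟨_, rfl⟩ | ⟨hne, rfl⟩
      · exact le_rfl
      · rw [div_le_iff₀ (norm_pos_iff.2 hne)]
        exact (real_inner_le_norm _ _).trans (by rw [mul_comm])
    choose dd hdd hbnd using hder
    obtain ⟨p, -, hpx, hder'⟩ := hasDerivWithinAt_finset_sup' Finset.univ hPne
      (fun p τ => ‖x p.1 τ - x p.2 τ‖) dd t (fun p _ => hdd p)
    exact ⟨dd p, hder', (hbnd p).trans (hVle t p.1 p.2)⟩
  -- right-derivative dissipation for the velocity diameter
  have KeyV : ∀ t ∈ Ici (0:ℝ), ∃ d, HasDerivWithinAt Vv d (Ici t) t ∧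
      d ≤ -(M * φ (Dd t)) * Vv t := by
    intro t ht
    set wdot : Fin N → Fin N → EuclideanSpace ℝ (Fin n) := fun i j =>
      (∑ k, (m k * φij i k t) • (v k t - v i t)) - (∑ k, (m k * φij j k t) • (v k t - v j t))
      with hwdot
    have hder : ∀ p : Fin N × Fin N, ∃ d,
        HasDerivWithinAt (fun τ => ‖v p.1 τ - v p.2 τ‖) d (Ici t) t ∧
        ((v p.1 t - v p.2 t = 0 ∧ d = ‖wdot p.1 p.2‖) ∨
         (v p.1 t - v p.2 t ≠ 0 ∧
          d = (inner ℝ (v p.1 t - v p.2 t) (wdot p.1 p.2) : ℝ) / ‖v p.1 t - v p.2 t‖)) := by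
      intro p
      have hw : HasDerivWithinAt (fun τ => v p.1 τ - v p.2 τ) (wdot p.1 p.2) (Ici t) t :=
        ((hv p.1 t ht).mono (Ici_subset_Ici.2 ht)).sub ((hv p.2 t ht).mono (Ici_subset_Ici.2 ht))
      exact norm_hasDerivWithinAt hw
    choose dd hdd hcase using hder
    obtain ⟨p, -, hpx, hder'⟩ := hasDerivWithinAt_finset_sup' Finset.univ hPne
      (fun p τ => ‖v p.1 τ - v p.2 τ‖) dd t (fun p _ => hdd p)
    refine ⟨dd p, hder', ?_⟩
    have hφD0 : 0 ≤ φ (Dd t) := (hφpos _ (hD0 t)).le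
    rcases hcase p with ⟨hz, hdz⟩ | ⟨hnz, hdnz⟩
    · -- all velocities coincide
      have hVt : Vv t = 0 := by
        rw [hz, norm_zero] at hpx
        exact hpx.symm
      have hall : ∀ a b : Fin N, v a t = v b t := by
        intro a b
        have h1 : ‖v a t - v b t‖ ≤ Vv t := hVle t a b
        rw [hVt] at h1
        have := le_antisymm h1 (norm_nonneg _)
        rwa [norm_eq_zero, sub_eq_zero] at this
      have hwz : wdot p.1 p.2 = 0 := by
        rw [hwdot]
        simp only
        have h1 : ∀ (i : Fin N), ∑ k, (m k * φij i k t) • (v k t - v i t) = 0 := by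
          intro i
          apply Finset.sum_eq_zero
          intro k _
          rw [hall k i, sub_self, smul_zero]
        rw [h1, h1, sub_self]
      rw [hdz, hwz, norm_zero, hVt, mul_zero]
    · set w := v p.1 t - v p.2 t with hwdef
      have hwpos : 0 < ‖w‖ := norm_pos_iff.2 hnz
      have hVt : ‖w‖ = Vv t := hpx
      -- the key inner product estimate
      have hkey : (inner ℝ w (wdot p.1 p.2) : ℝ) ≤ -(M * φ (Dd t)) * ‖w‖ ^ 2 := by
        have hinner : (inner ℝ w (wdot p.1 p.2) : ℝ) =
            ∑ k, ((m k * φij p.1 k t) * (inner ℝ w (v k t - v p.1 t) : ℝ)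
              - (m k * φij p.2 k t) * (inner ℝ w (v k t - v p.2 t) : ℝ)) := by
          rw [hwdot]
          simp only [inner_sub_right, inner_sum, real_inner_smul_right]
          rw [← Finset.sum_sub_distrib]
        rw [hinner]
        have hterm : ∀ k : Fin N,
            (m k * φij p.1 k t) * (inner ℝ w (v k t - v p.1 t) : ℝ)
              - (m k * φij p.2 k t) * (inner ℝ w (v k t - v p.2 t) : ℝ)
            ≤ -(m k * (φ (Dd t) * ‖w‖ ^ 2)) := by
          intro k
          set ak : ℝ := (inner ℝ w (v k t - v p.1 t) : ℝ) with hak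
          set bk : ℝ := (inner ℝ w (v k t - v p.2 t) : ℝ) with hbk
          have habk : ak - bk = -(‖w‖ ^ 2) := by
            rw [hak, hbk, ← inner_sub_right]
            have h1 : (v k t - v p.1 t) - (v k t - v p.2 t) = -w := by
              rw [hwdef]; abel
            rw [h1, inner_neg_right, real_inner_self_eq_norm_sq]
          have hbk0 : 0 ≤ bk := by
            have h1 : -(‖w‖ * ‖v k t - v p.1 t‖) ≤ ak := by
              rw [hak]
              exact neg_le_of_neg_le (by
                have := abs_real_inner_le_norm w (v k t - v p.1 t)
                have h2 := neg_abs_le ((inner ℝ w (v k t - v p.1 t)) : ℝ)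
                linarith)
            have h2 : ‖v k t - v p.1 t‖ ≤ ‖w‖ := by
              rw [hVt]; exact hVle t k p.1
            nlinarith [norm_nonneg w]
          have hak0 : ak ≤ 0 := by
            have h1 : bk ≤ ‖w‖ * ‖v k t - v p.2 t‖ := real_inner_le_norm _ _
            have h2 : ‖v k t - v p.2 t‖ ≤ ‖w‖ := by
              rw [hVt]; exact hVle t k p.2
            nlinarith [norm_nonneg w]
          have hcoef1 : φ (Dd t) ≤ φij p.1 k t :=
            (hφanti (norm_nonneg _) (hD0 t) (hDle t p.1 k)).trans (hφijφ p.1 k t ht)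
          have hcoef2 : φ (Dd t) ≤ φij p.2 k t :=
            (hφanti (norm_nonneg _) (hD0 t) (hDle t p.2 k)).trans (hφijφ p.2 k t ht)
          have h1 : (m k * φij p.1 k t) * ak ≤ (m k * φ (Dd t)) * ak :=
            mul_le_mul_of_nonpos_right (mul_le_mul_of_nonneg_left hcoef1 (hm k).le) hak0
          have h2 : (m k * φ (Dd t)) * bk ≤ (m k * φij p.2 k t) * bk :=
            mul_le_mul_of_nonneg_right (mul_le_mul_of_nonneg_left hcoef2 (hm k).le) hbk0
          have h3 : (m k * φ (Dd t)) * ak - (m k * φ (Dd t)) * bk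
              = -(m k * (φ (Dd t) * ‖w‖ ^ 2)) := by
            rw [← mul_sub, habk]; ring
          linarith
        calc (∑ k, ((m k * φij p.1 k t) * (inner ℝ w (v k t - v p.1 t) : ℝ)
              - (m k * φij p.2 k t) * (inner ℝ w (v k t - v p.2 t) : ℝ)))
            ≤ ∑ k, -(m k * (φ (Dd t) * ‖w‖ ^ 2)) := Finset.sum_le_sum (fun k _ => hterm k)
          _ = -(M * φ (Dd t)) * ‖w‖ ^ 2 := by
              rw [hMdef, Finset.sum_neg_distrib, ← Finset.sum_mul]
              ring
      have h4 := (div_le_div_iff_of_pos_right hwpos).2 hkey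
      have h5 : (-(M * φ (Dd t)) * ‖w‖ ^ 2) / ‖w‖ = -(M * φ (Dd t)) * ‖w‖ := by
        field_simp
      rw [h5] at h4
      rw [hdnz, ← hVt]
      exact h4
  -- directional maxima of velocities are nonincreasing
  have KeyW : ∀ e : EuclideanSpace ℝ (Fin n), ∀ s' t' : ℝ, 0 ≤ s' → s' ≤ t' →
      Finset.univ.sup' hQne (fun k => (inner ℝ (v k t') e : ℝ)) ≤
      Finset.univ.sup' hQne (fun k => (inner ℝ (v k s') e : ℝ)) := by
    intro e s' t' hs' hst
    have hWd : ∀ τ ∈ Ico s' t', ∃ d,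
        HasDerivWithinAt (fun σ => Finset.univ.sup' hQne (fun k => (inner ℝ (v k σ) e : ℝ)))
          d (Ici τ) τ ∧ d ≤ 0 := by
      intro τ hτ
      have hτ0 : (0:ℝ) ≤ τ := le_trans hs' hτ.1
      have hder : ∀ k : Fin N, HasDerivWithinAt (fun σ => (inner ℝ (v k σ) e : ℝ))
          ((inner ℝ (v k τ) (0 : EuclideanSpace ℝ (Fin n)) : ℝ)
            + (inner ℝ (∑ j, (m j * φij k j τ) • (v j τ - v k τ)) e : ℝ)) (Ici τ) τ :=
        fun k => ((hv k τ hτ0).mono (Ici_subset_Ici.2 hτ0)).inner ℝ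
          (hasDerivWithinAt_const τ _ e)
      obtain ⟨k0, -, hk0x, hder'⟩ := hasDerivWithinAt_finset_sup' Finset.univ hQne
        (fun k σ => (inner ℝ (v k σ) e : ℝ)) _ τ (fun k _ => hder k)
      refine ⟨_, hder', ?_⟩
      rw [inner_zero_right, zero_add]
      rw [sum_inner]
      apply Finset.sum_nonpos
      intro j _
      rw [real_inner_smul_left, inner_sub_left]
      have h1 : (inner ℝ (v j τ) e : ℝ) ≤ (inner ℝ (v k0 τ) e : ℝ) := by
        rw [hk0x]
        exact Finset.le_sup' (fun k => (inner ℝ (v k τ) e : ℝ)) (Finset.mem_univ j)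
      have h2 : 0 ≤ m j * φij k0 j τ := mul_nonneg (hm j).le (hφij0 k0 j τ hτ0)
      nlinarith
    have hWc : ContinuousOn (fun σ => Finset.univ.sup' hQne (fun k => (inner ℝ (v k σ) e : ℝ)))
        (Icc s' t') := by
      apply ContinuousOn.finset_sup'_apply hQne
      intro k _
      exact ((hvc k).mono (fun z hz => le_trans hs' hz.1)).inner continuousOn_const
    exact le_initial_of_rightDeriv_nonpos hWc hWd t' ⟨hst, le_rfl⟩
  -- the primitive of φ
  set Φ : ℝ → ℝ := fun u => ∫ r in (0:ℝ)..u, φ r with hΦdef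
  have hInt : ∀ b ∈ Ici (0:ℝ), IntervalIntegrable φ MeasureTheory.volume 0 b := by
    intro b hb
    apply ContinuousOn.intervalIntegrable
    rw [uIcc_of_le hb]
    exact hφc.mono (fun z hz => hz.1)
  have hΦd : ∀ u ∈ Ici (0:ℝ), HasDerivWithinAt Φ (φ u) (Ici 0) u := by
    intro u hu
    rcases eq_or_lt_of_le (mem_Ici.1 hu) with h0 | h0
    · rw [← h0]
      exact intervalIntegral.integral_hasDerivWithinAt_right (t := Ioi 0) (hInt 0 self_mem_Ici)
        ((hφc.mono (fun z hz => le_of_lt hz)).stronglyMeasurableAtFilter_nhdsWithin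
          measurableSet_Ioi 0)
        ((hφc 0 self_mem_Ici).mono Ioi_subset_Ici_self)
    · have hca : ContinuousAt φ u :=
        hφc.continuousAt (Ici_mem_nhds h0)
      have hmeas : StronglyMeasurableAtFilter φ (𝓝 u) MeasureTheory.volume :=
        ⟨Ioi 0, Ioi_mem_nhds h0,
          (hφc.mono (fun z hz => le_of_lt hz)).aestronglyMeasurable measurableSet_Ioi⟩
      exact (intervalIntegral.integral_hasDerivAt_right (hInt u hu) hmeas hca).hasDerivWithinAt
  have hΦc : ContinuousOn Φ (Ici 0) := fun u hu => (hΦd u hu).continuousWithinAt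
  have hΦmono : MonotoneOn Φ (Ici 0) := by
    intro a ha b hb hab
    have h1 : Φ b - Φ a = ∫ r in a..b, φ r := by
      rw [hΦdef]
      rw [intervalIntegral.integral_interval_sub_left (hInt b hb) (hInt a ha)]
    have h2 : 0 ≤ ∫ r in a..b, φ r := by
      apply intervalIntegral.integral_nonneg hab
      intro z hz
      exact (hφpos z (le_trans ha hz.1)).le
    linarith
  -- the Lyapunov functional is nonincreasing
  set G : ℝ → ℝ := fun τ => M * Φ (Dd τ) + Vv τ with hGdef
  have KeyG : ∀ τ ∈ Ici (0:ℝ), ∃ d, HasDerivWithinAt G d (Ici τ) τ ∧ d ≤ 0 := by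
    intro τ hτ
    obtain ⟨dD, hdD, hdDle⟩ := KeyD τ hτ
    obtain ⟨dV, hdV, hdVle⟩ := KeyV τ hτ
    have hmaps : MapsTo Dd (Ici τ) (Ici 0) := fun z _ => hD0 z
    have hcomp : HasDerivWithinAt (fun σ => Φ (Dd σ)) (φ (Dd τ) * dD) (Ici τ) τ :=
      (hΦd (Dd τ) (hD0 τ)).comp τ hdD hmaps
    refine ⟨M * (φ (Dd τ) * dD) + dV, (hcomp.const_mul M).add hdV, ?_⟩
    have hq : 0 ≤ φ (Dd τ) := (hφpos _ (hD0 τ)).le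
    have h1 : M * (φ (Dd τ) * dD) ≤ M * (φ (Dd τ) * Vv τ) := by
      apply mul_le_mul_of_nonneg_left _ hM.le
      exact mul_le_mul_of_nonneg_left hdDle hq
    nlinarith
  have hGmono : ∀ τ ∈ Ici (0:ℝ), G τ ≤ G 0 := by
    intro τ hτ
    have hGc : ContinuousOn G (Icc 0 τ) := by
      apply ContinuousOn.add _ (hVc.mono (fun z hz => hz.1))
      apply continuousOn_const.mul
      exact hΦc.comp (hDc.mono (fun z hz => hz.1)) (fun z _ => hD0 z)
    exact le_initial_of_rightDeriv_nonpos hGc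
      (fun z hz => KeyG z hz.1) τ ⟨hτ, le_rfl⟩
  -- uniform bound on the diameter
  obtain ⟨R, hR⟩ := Filter.eventually_atTop.1
    (Filter.tendsto_atTop.1 hφfat (Φ (Dd 0) + Vv 0 / M + 1))
  set Dstar : ℝ := max R 0 with hDstar
  have hDstar0 : (0:ℝ) ≤ Dstar := le_max_right _ _
  have hΦstar : Φ (Dd 0) + Vv 0 / M + 1 ≤ Φ Dstar := hR Dstar (le_max_left _ _)
  have hDbound : ∀ τ ∈ Ici (0:ℝ), Dd τ ≤ Dstar := by
    intro τ hτ
    by_contra hcon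
    push_neg at hcon
    have h1 : Φ Dstar ≤ Φ (Dd τ) := hΦmono (mem_Ici.2 hDstar0) (mem_Ici.2 (hD0 τ)) hcon.le
    have h2 := hGmono τ hτ
    rw [hGdef] at h2
    simp only at h2
    have h3 : M * (Vv 0 / M) = Vv 0 := by field_simp
    nlinarith [hV0 τ, hV0 0, hM]
  set c : ℝ := M * φ Dstar with hc
  have hcpos : 0 < c := mul_pos hM (hφpos Dstar hDstar0)
  -- exponential decay of the velocity diameter
  have hVdecay : ∀ τ ∈ Ici (0:ℝ), Vv τ ≤ Vv 0 * Real.exp (-c * τ) := by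
    intro τ hτ
    have hHc : ContinuousOn (fun σ => Vv σ * Real.exp (c * σ)) (Icc 0 τ) :=
      (hVc.mono (fun z hz => hz.1)).mul
        ((Real.continuous_exp.comp (continuous_const.mul continuous_id)).continuousOn)
    have hHd : ∀ z ∈ Ico 0 τ, ∃ d,
        HasDerivWithinAt (fun σ => Vv σ * Real.exp (c * σ)) d (Ici z) z ∧ d ≤ 0 := by
      intro z hz
      obtain ⟨dV, hdV, hdVle⟩ := KeyV z hz.1
      have hexp : HasDerivWithinAt (fun σ => Real.exp (c * σ))
          (Real.exp (c * z) * c) (Ici z) z := by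
        simpa using (((hasDerivAt_id z).const_mul c).exp).hasDerivWithinAt (s := Ici z)
      refine ⟨dV * Real.exp (c * z) + Vv z * (Real.exp (c * z) * c), hdV.mul hexp, ?_⟩
      have hφge : c ≤ M * φ (Dd z) := by
        apply mul_le_mul_of_nonneg_left _ hM.le
        exact hφanti (mem_Ici.2 (hD0 z)) (mem_Ici.2 hDstar0) (hDbound z hz.1)
      have hexppos : 0 < Real.exp (c * z) := Real.exp_pos _
      nlinarith [hV0 z, mul_le_mul_of_nonneg_right hdVle hexppos.le,
        mul_le_mul_of_nonneg_right (mul_le_mul_of_nonneg_right hφge (hV0 z)) hexppos.le]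
    have h1 := le_initial_of_rightDeriv_nonpos hHc hHd τ ⟨hτ, le_rfl⟩
    simp only [mul_zero, Real.exp_zero, mul_one] at h1
    have h2 : Vv τ = (Vv τ * Real.exp (c * τ)) * Real.exp (-c * τ) := by
      rw [mul_assoc, ← Real.exp_add]
      simp
    rw [h2]
    exact mul_le_mul_of_nonneg_right h1 (Real.exp_pos _).le
  -- velocities move at most `Vv s'` after time `s'`
  have hstep : ∀ (i : Fin N) (s' t' : ℝ), 0 ≤ s' → s' ≤ t' → ‖v i t' - v i s'‖ ≤ Vv s' := by
    intro i s' t' hs' hst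
    by_cases hu : v i t' - v i s' = 0
    · rw [hu, norm_zero]; exact hV0 s'
    · set u := v i t' - v i s' with hudef
      have hupos : 0 < ‖u‖ := norm_pos_iff.2 hu
      have h1 : (inner ℝ (v i t') u : ℝ) ≤
          Finset.univ.sup' hQne (fun k => (inner ℝ (v k t') u : ℝ)) :=
        Finset.le_sup' (fun k => (inner ℝ (v k t') u : ℝ)) (Finset.mem_univ i)
      have h2 := KeyW u s' t' hs' hst
      obtain ⟨k0, -, hk0⟩ := Finset.exists_mem_eq_sup' hQne (fun k => (inner ℝ (v k s') u : ℝ))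
      have h3 : (inner ℝ (v k0 s') u : ℝ) ≤ (inner ℝ (v i s') u : ℝ) + Vv s' * ‖u‖ := by
        have h4 : (inner ℝ (v k0 s' - v i s') u : ℝ) ≤ ‖v k0 s' - v i s'‖ * ‖u‖ :=
          real_inner_le_norm _ _
        have h5 : ‖v k0 s' - v i s'‖ ≤ Vv s' := hVle s' k0 i
        rw [inner_sub_left] at h4
        nlinarith [norm_nonneg u]
      have h6 : (inner ℝ (v i t') u : ℝ) - (inner ℝ (v i s') u : ℝ) = ‖u‖ ^ 2 := by
        rw [← inner_sub_left, ← hudef, real_inner_self_eq_norm_sq]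
      have h7 : ‖u‖ ^ 2 ≤ Vv s' * ‖u‖ := by
        rw [← h6]
        rw [hk0] at h2
        linarith
      nlinarith
  -- convergence of velocities
  have hVdecayNat : ∀ k : ℕ, Vv k ≤ Vv 0 * Real.exp (-c * k) := fun k =>
    hVdecay k (mem_Ici.2 (Nat.cast_nonneg k))
  have hcauchy : CauchySeq (fun k : ℕ => v i0 k) := by
    refine cauchySeq_of_le_tendsto_0 (fun k : ℕ => 2 * (Vv 0 * Real.exp (-c * k))) ?_ ?_
    · intro a b K ha hb
      have hper : ∀ a : ℕ, K ≤ a → dist (v i0 a) (v i0 K) ≤ Vv 0 * Real.exp (-c * K) := by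
        intro a ha
        rw [dist_eq_norm]
        exact le_trans (hstep i0 K a (Nat.cast_nonneg K) (Nat.cast_le.2 ha))
          (hVdecayNat K)
      calc dist (v i0 a) (v i0 b) ≤ dist (v i0 a) (v i0 K) + dist (v i0 K) (v i0 b) :=
            dist_triangle _ _ _
        _ ≤ Vv 0 * Real.exp (-c * K) + Vv 0 * Real.exp (-c * K) := by
            rw [dist_comm (v i0 (K:ℝ))]
            exact add_le_add (hper a ha) (hper b hb)
        _ = 2 * (Vv 0 * Real.exp (-c * K)) := by ring
    · have h1 : Tendsto (fun k : ℕ => Real.exp (-c * k)) atTop (𝓝 0) := by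
        have h2 : ∀ k : ℕ, Real.exp (-c * k) = (Real.exp (-c)) ^ k := by
          intro k
          rw [← Real.exp_nat_mul]
          ring_nf
        simp only [h2]
        exact tendsto_pow_atTop_nhds_zero_of_lt_one (Real.exp_nonneg _)
          (Real.exp_lt_one_iff.2 (neg_lt_zero.2 hcpos))
      have := (h1.const_mul (Vv 0)).const_mul 2
      simpa using this
  obtain ⟨uinf, huinf⟩ := cauchySeq_tendsto_of_complete hcauchy
  have hlim : ∀ τ ∈ Ici (0:ℝ), ‖v i0 τ - uinf‖ ≤ Vv τ := by
    intro τ hτ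
    have h1 : Tendsto (fun k : ℕ => ‖v i0 τ - v i0 k‖) atTop (𝓝 ‖v i0 τ - uinf‖) :=
      (tendsto_const_nhds.sub huinf).norm
    apply le_of_tendsto h1
    rw [Filter.eventually_atTop]
    refine ⟨⌈τ⌉₊, fun k hk => ?_⟩
    have hτk : τ ≤ (k : ℝ) := le_trans (Nat.le_ceil τ) (Nat.cast_le.2 hk)
    rw [norm_sub_rev]
    exact hstep i0 τ k hτ hτk
  -- assembly
  refine ⟨Dstar + 2 * Vv 0 + 1, by nlinarith [hV0 0], c, hcpos, uinf, ?_⟩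
  intro t ht
  have hexp1 : Real.exp (-c * t) ≤ 1 := Real.exp_le_one_iff.2 (by nlinarith)
  have hexppos : (0:ℝ) < Real.exp (-c * t) := Real.exp_pos _
  refine ⟨?_, ?_, ?_⟩
  · intro i j
    have := (hDle t i j).trans (hDbound t ht)
    nlinarith [hV0 0]
  · intro i j
    have h1 := (hVle t i j).trans (hVdecay t ht)
    nlinarith [hV0 0]
  · intro i
    have h1 : ‖v i t - uinf‖ ≤ ‖v i t - v i0 t‖ + ‖v i0 t - uinf‖ := by
      have := norm_add_le (v i t - v i0 t) (v i0 t - uinf)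
      simpa using this
    have h2 : ‖v i t - v i0 t‖ ≤ Vv t := hVle t i i0
    have h3 := hlim t ht
    have h4 := hVdecay t ht
    nlinarith [hV0 0]
end

section
/- Law of the quantity e for the pressureless Euler-alignment system with transported strength: let T > 0 and let u : [0,T) × ℝⁿ → ℝⁿ be C², and s : [0,T) × ℝⁿ → ℝ and w : [0,T) × ℝⁿ → ℝⁿ be C¹, satisfying on [0,T) × ℝⁿ the momentum equation ∂_t u + (u·∇)u = s·(w − u) and the strength continuity equation ∂_t s + ∇·(s w) = 0. Then the quantity e := ∇·u + s satisfies pointwise ∂_t e + ∇·(u e) = (∇·u)² − Tr((∇u)²), where ∇u is the spatial Jacobian matrix of u. In particular, if n = 1, or more generally if (∇·u)² = Tr((∇u)²) (e.g. for unidirectional flows u = (u¹(x),0,…,0)), then e satisfies the continuity equation ∂_t e + ∇·(u e) = 0 and is transported by the flow. -/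
/-- The `i`-th partial derivative of a scalar function on `ℝⁿ = Fin n → ℝ`. -/
noncomputable def pd {n : ℕ} (i : Fin n) (f : (Fin n → ℝ) → ℝ) (x : Fin n → ℝ) : ℝ :=
  fderiv ℝ f x (Pi.single i 1)

/-- The divergence of a vector field on `ℝⁿ = Fin n → ℝ`. -/
noncomputable def dvg {n : ℕ} (F : (Fin n → ℝ) → Fin n → ℝ) (x : Fin n → ℝ) : ℝ :=
  ∑ i, pd i (fun y => F y i) x

lemma pd_of_hasFDerivAt {n : ℕ} {f : (Fin n → ℝ) → ℝ} {L : (Fin n → ℝ) →L[ℝ] ℝ}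
    {x : Fin n → ℝ} (h : HasFDerivAt f L x) (i : Fin n) : pd i f x = L (Pi.single i 1) := by
  rw [pd, h.fderiv]

lemma pd_mul {n : ℕ} {f g : (Fin n → ℝ) → ℝ} {Lf Lg : (Fin n → ℝ) →L[ℝ] ℝ} {x : Fin n → ℝ}
    (hf : HasFDerivAt f Lf x) (hg : HasFDerivAt g Lg x) (i : Fin n) :
    pd i (fun y => f y * g y) x
      = f x * Lg (Pi.single i 1) + g x * Lf (Pi.single i 1) := by
  rw [pd_of_hasFDerivAt (f := fun y => f y * g y) (hf.mul hg) i]; simp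


/-- Evaluation of an operator at a vector, composed with a coordinate projection. -/
noncomputable def evC {n : ℕ} (v : ℝ × (Fin n → ℝ)) (i : Fin n) :
    ((ℝ × (Fin n → ℝ)) →L[ℝ] (Fin n → ℝ)) →L[ℝ] ℝ :=
  (ContinuousLinearMap.proj i).comp (ContinuousLinearMap.apply ℝ (Fin n → ℝ) v)

@[simp] lemma evC_apply {n : ℕ} (v : ℝ × (Fin n → ℝ)) (i : Fin n)
    (M : (ℝ × (Fin n → ℝ)) →L[ℝ] (Fin n → ℝ)) : evC v i M = M v i := rfl

section helpers
variable {T : ℝ} {n : ℕ} {F : Type*} [NormedAddCommGroup F] [NormedSpace ℝ F]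

lemma sliceSpace {f : ℝ × (Fin n → ℝ) → F} {t : ℝ} (ht : t ∈ Set.Ico 0 T) (x : Fin n → ℝ)
    (hf : DifferentiableWithinAt ℝ f (Set.Ico 0 T ×ˢ (Set.univ : Set (Fin n → ℝ))) (t, x)) :
    HasFDerivAt (fun y => f (t, y))
      ((fderivWithin ℝ f (Set.Ico 0 T ×ˢ (Set.univ : Set (Fin n → ℝ))) (t, x)).comp
        (ContinuousLinearMap.inr ℝ ℝ (Fin n → ℝ))) x := by
  have h2 : HasFDerivAt (fun y : Fin n → ℝ => ((t, y) : ℝ × (Fin n → ℝ)))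
      (ContinuousLinearMap.inr ℝ ℝ (Fin n → ℝ)) x :=
    HasFDerivAt.prodMk (hasFDerivAt_const t x) (hasFDerivAt_id x)
  have h := hf.hasFDerivWithinAt.comp x
    (h2.hasFDerivWithinAt (s := (Set.univ : Set (Fin n → ℝ))))
    (fun y _ => Set.mk_mem_prod ht (Set.mem_univ y))
  rw [hasFDerivWithinAt_univ] at h
  exact h

lemma sliceTime {f : ℝ × (Fin n → ℝ) → F} {t : ℝ} (ht : t ∈ Set.Ico 0 T) (x : Fin n → ℝ)
    (hf : DifferentiableWithinAt ℝ f (Set.Ico 0 T ×ˢ (Set.univ : Set (Fin n → ℝ))) (t, x)) :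
    HasDerivWithinAt (fun τ => f (τ, x))
      (fderivWithin ℝ f (Set.Ico 0 T ×ˢ (Set.univ : Set (Fin n → ℝ))) (t, x) (1, 0))
      (Set.Ico 0 T) t := by
  have h2 : HasDerivWithinAt (fun τ : ℝ => ((τ, x) : ℝ × (Fin n → ℝ))) ((1 : ℝ), (0 : Fin n → ℝ))
      (Set.Ico 0 T) t := (HasDerivAt.prodMk (hasDerivAt_id t) (hasDerivAt_const t x)).hasDerivWithinAt
  exact hf.hasFDerivWithinAt.comp_hasDerivWithinAt t h2
    (fun τ hτ => Set.mk_mem_prod hτ (Set.mem_univ x))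

lemma vec_eq_sum (v : Fin n → ℝ) :
    ((0 : ℝ), v) = ∑ j, v j • (((0 : ℝ), Pi.single j (1 : ℝ)) : ℝ × (Fin n → ℝ)) := by
  have h1 : v = ∑ j, v j • (Pi.single j (1 : ℝ) : Fin n → ℝ) := by
    funext k; simp [Finset.sum_apply, Pi.single_apply, mul_comm]
  rw [Prod.ext_iff]
  refine ⟨by rw [Prod.fst_sum]; simp, ?_⟩
  rw [Prod.snd_sum]
  simpa using h1

end helpers


lemma final_algebra (n : ℕ) (dd : Fin n → Fin n → ℝ) (q : Fin n → Fin n → Fin n → ℝ)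
    (σ ω ux wx R : Fin n → ℝ) (sx st : ℝ)
    (hqsym : ∀ a b c, q a b c = q b a c)
    (hst : st + ∑ i, (sx * ω i + wx i * σ i) = 0)
    (hR : ∀ i, R i + ∑ j, (ux j * q i j i + dd j i * dd i j)
        = σ i * (wx i - ux i) + sx * (ω i - dd i i)) :
    ((∑ i, R i) + st) + ∑ j, ((∑ i, dd i i + sx) * dd j j + ux j * ((∑ i, q j i i) + σ j)) =
      (∑ i, dd i i) ^ 2 - ∑ i, ∑ j, dd j i * dd i j := by
  have hG : ∑ j, ux j * ((∑ i, q j i i) + σ j)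
      = (∑ j, ux j * ∑ i, q i j i) + ∑ j, σ j * ux j := by
    rw [← Finset.sum_add_distrib]
    refine Finset.sum_congr rfl fun j _ => ?_
    have : (∑ i, q j i i) = ∑ i, q i j i :=
      Finset.sum_congr rfl fun i _ => hqsym j i i
    rw [this]; ring
  have hS : ∑ i, ∑ j, (ux j * q i j i + dd j i * dd i j)
      = (∑ j, ux j * ∑ i, q i j i) + ∑ i, ∑ j, dd j i * dd i j := by
    simp only [Finset.sum_add_distrib]
    congr 1
    rw [Finset.sum_comm]
    exact Finset.sum_congr rfl fun j _ => (Finset.mul_sum _ _ _).symm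
  have hRsum : ∑ i, R i = (∑ i, σ i * wx i - ∑ i, σ i * ux i + ∑ i, sx * ω i
        - sx * ∑ i, dd i i)
      - ((∑ j, ux j * ∑ i, q i j i) + ∑ i, ∑ j, dd j i * dd i j) := by
    rw [← hS, eq_sub_iff_add_eq, ← Finset.sum_add_distrib]
    have : ∑ i, (R i + ∑ j, (ux j * q i j i + dd j i * dd i j))
        = ∑ i, (σ i * (wx i - ux i) + sx * (ω i - dd i i)) :=
      Finset.sum_congr rfl fun i _ => hR i
    rw [this]
    simp only [mul_sub, Finset.sum_add_distrib, Finset.sum_sub_distrib, Finset.mul_sum]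
    ring
  have hst2 : st = -(∑ i, sx * ω i + ∑ i, σ i * wx i) := by
    have h2 : ∑ i, (sx * ω i + wx i * σ i) = ∑ i, sx * ω i + ∑ i, σ i * wx i := by
      rw [Finset.sum_add_distrib]
      congr 1
      exact Finset.sum_congr rfl fun i _ => mul_comm _ _
    linarith [hst]
  have hD1 : ∑ j, ((∑ i, dd i i + sx) * dd j j)
      = (∑ i, dd i i) * (∑ i, dd i i) + sx * ∑ i, dd i i := by
    simp only [add_mul, Finset.sum_add_distrib, ← Finset.mul_sum]
  rw [Finset.sum_add_distrib, hG, hD1, hRsum, hst2]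
  ring

set_option maxHeartbeats 1000000 in
theorem euler_key
    (n : ℕ) (T : ℝ) (hT : 0 < T)
    (u : ℝ → (Fin n → ℝ) → Fin n → ℝ)
    (s : ℝ → (Fin n → ℝ) → ℝ)
    (w : ℝ → (Fin n → ℝ) → Fin n → ℝ)
    (hu : ContDiffOn ℝ 2 (fun q : ℝ × (Fin n → ℝ) => u q.1 q.2) (Set.Ico 0 T ×ˢ Set.univ))
    (hs : ContDiffOn ℝ 1 (fun q : ℝ × (Fin n → ℝ) => s q.1 q.2) (Set.Ico 0 T ×ˢ Set.univ))
    (hw : ContDiffOn ℝ 1 (fun q : ℝ × (Fin n → ℝ) => w q.1 q.2) (Set.Ico 0 T ×ˢ Set.univ))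
    (hmom : ∀ t ∈ Set.Ico (0 : ℝ) T, ∀ x,
      derivWithin (fun τ => u τ x) (Set.Ico 0 T) t + fderiv ℝ (u t) x (u t x) =
        s t x • (w t x - u t x))
    (hstr : ∀ t ∈ Set.Ico (0 : ℝ) T, ∀ x,
      derivWithin (fun τ => s τ x) (Set.Ico 0 T) t +
        dvg (fun y => s t y • w t y) x = 0)
    (t : ℝ) (ht : t ∈ Set.Ico (0 : ℝ) T) (x : Fin n → ℝ) :
      derivWithin (fun τ => dvg (u τ) x + s τ x) (Set.Ico 0 T) t +
          dvg (fun y => (dvg (u t) y + s t y) • u t y) x =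
        (dvg (u t) x) ^ 2 -
          ∑ i, ∑ j, pd j (fun y => u t y i) x * pd i (fun y => u t y j) x := by
  classical
  have hSu : UniqueDiffOn ℝ (Set.Ico 0 T ×ˢ (Set.univ : Set (Fin n → ℝ))) :=
    (uniqueDiffOn_Ico 0 T).prod uniqueDiffOn_univ
  have hUd : DifferentiableOn ℝ (fun q : ℝ × (Fin n → ℝ) => u q.1 q.2)
      (Set.Ico 0 T ×ˢ Set.univ) := hu.differentiableOn (by norm_num)
  have hsd : DifferentiableOn ℝ (fun q : ℝ × (Fin n → ℝ) => s q.1 q.2)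
      (Set.Ico 0 T ×ˢ Set.univ) := hs.differentiableOn (by norm_num)
  have hwd : DifferentiableOn ℝ (fun q : ℝ × (Fin n → ℝ) => w q.1 q.2)
      (Set.Ico 0 T ×ˢ Set.univ) := hw.differentiableOn (by norm_num)
  have hmemS : ∀ t' ∈ Set.Ico (0:ℝ) T, ∀ y : Fin n → ℝ,
      ((t', y) : ℝ × (Fin n → ℝ)) ∈ Set.Ico 0 T ×ˢ (Set.univ : Set (Fin n → ℝ)) :=
    fun t' ht' y => ⟨ht', trivial⟩
  set Du : ℝ × (Fin n → ℝ) → (ℝ × (Fin n → ℝ)) →L[ℝ] (Fin n → ℝ) :=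
    fderivWithin ℝ (fun q : ℝ × (Fin n → ℝ) => u q.1 q.2) (Set.Ico 0 T ×ˢ Set.univ) with hDudef
  have hDUd : DifferentiableOn ℝ Du (Set.Ico 0 T ×ˢ Set.univ) :=
    (hu.fderivWithin (m := 1) hSu (by norm_num)).differentiableOn (by norm_num)
  set B : (ℝ × (Fin n → ℝ)) →L[ℝ] (ℝ × (Fin n → ℝ)) →L[ℝ] (Fin n → ℝ) :=
    fderivWithin ℝ Du (Set.Ico 0 T ×ˢ Set.univ) (t, x) with hBdef
  set sA : (ℝ × (Fin n → ℝ)) →L[ℝ] ℝ :=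
    fderivWithin ℝ (fun q : ℝ × (Fin n → ℝ) => s q.1 q.2) (Set.Ico 0 T ×ˢ Set.univ) (t, x)
    with hsAdef
  set wA : (ℝ × (Fin n → ℝ)) →L[ℝ] (Fin n → ℝ) :=
    fderivWithin ℝ (fun q : ℝ × (Fin n → ℝ) => w q.1 q.2) (Set.Ico 0 T ×ˢ Set.univ) (t, x)
    with hwAdef
  -- symmetry of the second derivative
  have hsym : ∀ v v', B v v' = B v' v := by
    have hint : ((t, x) : ℝ × (Fin n → ℝ)) ∈
        closure (interior (Set.Ico 0 T ×ˢ (Set.univ : Set (Fin n → ℝ)))) := by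
      rw [interior_prod_eq, closure_prod_eq, interior_Ico, interior_univ, closure_univ,
        closure_Ioo hT.ne]
      exact ⟨⟨ht.1, ht.2.le⟩, trivial⟩
    exact (hu.contDiffWithinAt ⟨ht, trivial⟩).isSymmSndFDerivWithinAt (by norm_num) hSu hint
      ⟨ht, trivial⟩
  -- slice derivatives
  have hu_slice : ∀ y, HasFDerivAt (u t)
      ((Du (t, y)).comp (ContinuousLinearMap.inr ℝ ℝ (Fin n → ℝ))) y :=
    fun y => sliceSpace ht y (hUd _ (hmemS t ht y))
  have hA_slice : HasFDerivAt (fun y => Du (t, y))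
      (B.comp (ContinuousLinearMap.inr ℝ ℝ (Fin n → ℝ))) x :=
    sliceSpace ht x (hDUd _ (hmemS t ht x))
  have hs_slice : HasFDerivAt (s t)
      (sA.comp (ContinuousLinearMap.inr ℝ ℝ (Fin n → ℝ))) x :=
    sliceSpace ht x (hsd _ (hmemS t ht x))
  have hw_slice : HasFDerivAt (w t)
      (wA.comp (ContinuousLinearMap.inr ℝ ℝ (Fin n → ℝ))) x :=
    sliceSpace ht x (hwd _ (hmemS t ht x))
  have hu_time : ∀ y, HasDerivWithinAt (fun τ => u τ y) (Du (t, y) (1, 0)) (Set.Ico 0 T) t :=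
    fun y => sliceTime ht y (hUd _ (hmemS t ht y))
  have hA_time : HasDerivWithinAt (fun τ => Du (τ, x)) (B (1, 0)) (Set.Ico 0 T) t :=
    sliceTime ht x (hDUd _ (hmemS t ht x))
  have hs_time : HasDerivWithinAt (fun τ => s τ x) (sA (1, 0)) (Set.Ico 0 T) t :=
    sliceTime ht x (hsd _ (hmemS t ht x))
  have hu_comp : ∀ (y : Fin n → ℝ) (j : Fin n), HasFDerivAt (fun z => u t z j)
      ((ContinuousLinearMap.proj j).comp
        ((Du (t, y)).comp (ContinuousLinearMap.inr ℝ ℝ (Fin n → ℝ)))) y :=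
    fun y j => ((ContinuousLinearMap.proj j : (Fin n → ℝ) →L[ℝ] ℝ)).hasFDerivAt.comp y (hu_slice y)
  have hw_comp : ∀ i : Fin n, HasFDerivAt (fun z => w t z i)
      ((ContinuousLinearMap.proj i).comp
        (wA.comp (ContinuousLinearMap.inr ℝ ℝ (Fin n → ℝ)))) x :=
    fun i => ((ContinuousLinearMap.proj i : (Fin n → ℝ) →L[ℝ] ℝ)).hasFDerivAt.comp x hw_slice
  -- partial derivatives of u-components via the joint derivative
  have h1 : ∀ t' ∈ Set.Ico (0:ℝ) T, ∀ (y : Fin n → ℝ) (i i' : Fin n),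
      pd i (fun z => u t' z i') y = Du (t', y) ((0 : ℝ), Pi.single i 1) i' := by
    intro t' ht' y i i'
    have hsl := sliceSpace ht' y (hUd _ (hmemS t' ht' y))
    have hc : HasFDerivAt (fun z => u t' z i')
        ((ContinuousLinearMap.proj i').comp
          ((Du (t', y)).comp (ContinuousLinearMap.inr ℝ ℝ (Fin n → ℝ)))) y :=
      ((ContinuousLinearMap.proj i' : (Fin n → ℝ) →L[ℝ] ℝ)).hasFDerivAt.comp y hsl
    rw [pd_of_hasFDerivAt hc i]
    rfl
  have hdvgx : ∀ y : Fin n → ℝ, dvg (u t) y = ∑ i, Du (t, y) ((0:ℝ), Pi.single i 1) i := by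
    intro y
    simp only [dvg]
    exact Finset.sum_congr rfl fun i _ => h1 t ht y i i
  -- time derivative of e
  have hC1 : derivWithin (fun τ => dvg (u τ) x + s τ x) (Set.Ico 0 T) t
      = (∑ i, B ((0 : ℝ), Pi.single i 1) ((1 : ℝ), (0 : Fin n → ℝ)) i) + sA (1, 0) := by
    have heq : Set.EqOn (fun τ => dvg (u τ) x + s τ x)
        (fun τ => (∑ i, Du (τ, x) ((0 : ℝ), Pi.single i 1) i) + s τ x) (Set.Ico 0 T) := by
      intro τ hτ
      simp only [dvg]
      exact congrArg (· + s τ x) (Finset.sum_congr rfl fun i _ => h1 τ hτ x i i)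
    rw [derivWithin_congr heq (heq ht)]
    have hder : HasDerivWithinAt
        (fun τ => (∑ i, Du (τ, x) ((0 : ℝ), Pi.single i 1) i) + s τ x)
        ((∑ i, B ((1:ℝ), (0:Fin n → ℝ)) ((0 : ℝ), Pi.single i 1) i) + sA (1, 0))
        (Set.Ico 0 T) t := by
      refine HasDerivWithinAt.add ?_ hs_time
      refine HasDerivWithinAt.fun_sum fun i _ => ?_
      exact (evC ((0:ℝ), Pi.single i 1) i).hasFDerivAt.comp_hasDerivWithinAt t hA_time
    rw [hder.derivWithin (uniqueDiffOn_Ico 0 T t ht)]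
    congr 1
    exact Finset.sum_congr rfl fun i _ =>
      congrFun (hsym ((1:ℝ), (0:Fin n → ℝ)) ((0:ℝ), Pi.single i 1)) i
  -- spatial derivative of e
  have hE_fun : (fun y => dvg (u t) y + s t y)
      = fun y => (∑ i, Du (t, y) ((0:ℝ), Pi.single i 1) i) + s t y := by
    funext y
    exact congrArg (· + s t y) (hdvgx y)
  have hE_has : HasFDerivAt (fun y => dvg (u t) y + s t y)
      ((∑ i, (evC ((0:ℝ), Pi.single i 1) i).comp
          (B.comp (ContinuousLinearMap.inr ℝ ℝ (Fin n → ℝ))))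
        + sA.comp (ContinuousLinearMap.inr ℝ ℝ (Fin n → ℝ))) x := by
    rw [hE_fun]
    exact (HasFDerivAt.fun_sum fun i _ =>
      ((evC ((0:ℝ), Pi.single i 1) i).hasFDerivAt.comp x hA_slice)).add hs_slice
  -- divergence of e • u
  have hC3 : dvg (fun y => (dvg (u t) y + s t y) • u t y) x
      = ∑ j, (((∑ i, Du (t, x) ((0:ℝ), Pi.single i 1) i) + s t x)
            * Du (t, x) ((0:ℝ), Pi.single j 1) j
          + u t x j * ((∑ i, B ((0:ℝ), Pi.single j 1) ((0:ℝ), Pi.single i 1) i)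
            + sA ((0:ℝ), Pi.single j 1))) := by
    rw [dvg]
    refine Finset.sum_congr rfl fun j _ => ?_
    have hfun : (fun y => ((dvg (u t) y + s t y) • u t y) j)
        = fun y => (dvg (u t) y + s t y) * u t y j := by
      funext y; simp
    rw [hfun, pd_mul hE_has (hu_comp x j) j, hdvgx x]
    simp [ContinuousLinearMap.sum_apply]
  -- strength equation expansion
  have hdvg_sw : dvg (fun y => s t y • w t y) x
      = ∑ i, (s t x * wA ((0:ℝ), Pi.single i 1) i + w t x i * sA ((0:ℝ), Pi.single i 1)) := by
    rw [dvg]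
    refine Finset.sum_congr rfl fun i _ => ?_
    have hfun : (fun y => (s t y • w t y) i) = fun y => s t y * w t y i := by
      funext y; simp
    rw [hfun, pd_mul hs_slice (hw_comp i) i]
    rfl
  have hstr' : sA (1, 0)
      + ∑ i, (s t x * wA ((0:ℝ), Pi.single i 1) i + w t x i * sA ((0:ℝ), Pi.single i 1)) = 0 := by
    have h := hstr t ht x
    rw [hs_time.derivWithin (uniqueDiffOn_Ico 0 T t ht), hdvg_sw] at h
    exact h
  -- pointwise momentum equation in joint-derivative form
  have hmom' : ∀ i : Fin n, (fun y => Du (t, y) ((1:ℝ), (0 : Fin n → ℝ)) i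
      + ∑ j, u t y j * Du (t, y) ((0:ℝ), Pi.single j 1) i)
      = fun y => s t y * (w t y i - u t y i) := by
    intro i
    funext y
    have h := congrFun (hmom t ht y) i
    rw [Pi.add_apply] at h
    rw [(hu_time y).derivWithin (uniqueDiffOn_Ico 0 T t ht)] at h
    rw [(hu_slice y).fderiv] at h
    have hdec : (((Du (t, y)).comp (ContinuousLinearMap.inr ℝ ℝ (Fin n → ℝ))) (u t y)) i
        = ∑ j, u t y j * Du (t, y) ((0:ℝ), Pi.single j 1) i := by
      show (Du (t, y) ((0:ℝ), u t y)) i = _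
      rw [vec_eq_sum (u t y), map_sum]
      simp only [Finset.sum_apply]
      refine Finset.sum_congr rfl fun j _ => ?_
      rw [map_smul]
      simp
    rw [hdec] at h
    simpa using h
  -- divergence of the momentum equation
  have hpd_mom : ∀ i : Fin n,
      B ((0:ℝ), Pi.single i 1) ((1:ℝ), (0:Fin n → ℝ)) i
        + ∑ j, (u t x j * B ((0:ℝ), Pi.single i 1) ((0:ℝ), Pi.single j 1) i
            + Du (t, x) ((0:ℝ), Pi.single j 1) i * Du (t, x) ((0:ℝ), Pi.single i 1) j)
      = sA ((0:ℝ), Pi.single i 1) * (w t x i - u t x i)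
        + s t x * (wA ((0:ℝ), Pi.single i 1) i - Du (t, x) ((0:ℝ), Pi.single i 1) i) := by
    intro i
    have hL : HasFDerivAt (fun y => Du (t, y) ((1:ℝ), (0 : Fin n → ℝ)) i
        + ∑ j, u t y j * Du (t, y) ((0:ℝ), Pi.single j 1) i)
        ((evC ((1:ℝ), (0:Fin n → ℝ)) i).comp
            (B.comp (ContinuousLinearMap.inr ℝ ℝ (Fin n → ℝ)))
          + ∑ j, (u t x j • ((evC ((0:ℝ), Pi.single j 1) i).comp
              (B.comp (ContinuousLinearMap.inr ℝ ℝ (Fin n → ℝ))))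
            + Du (t, x) ((0:ℝ), Pi.single j 1) i •
              ((ContinuousLinearMap.proj j : (Fin n → ℝ) →L[ℝ] ℝ).comp
                ((Du (t, x)).comp (ContinuousLinearMap.inr ℝ ℝ (Fin n → ℝ)))))) x := by
      refine HasFDerivAt.add ?_ (HasFDerivAt.fun_sum fun j _ => ?_)
      · exact (evC ((1:ℝ), (0:Fin n → ℝ)) i).hasFDerivAt.comp x hA_slice
      · exact (hu_comp x j).mul
          ((evC ((0:ℝ), Pi.single j 1) i).hasFDerivAt.comp x hA_slice)
    have hR : HasFDerivAt (fun y => s t y * (w t y i - u t y i))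
        (s t x • (((ContinuousLinearMap.proj i : (Fin n → ℝ) →L[ℝ] ℝ).comp
              (wA.comp (ContinuousLinearMap.inr ℝ ℝ (Fin n → ℝ))))
            - ((ContinuousLinearMap.proj i : (Fin n → ℝ) →L[ℝ] ℝ).comp
              ((Du (t, x)).comp (ContinuousLinearMap.inr ℝ ℝ (Fin n → ℝ)))))
          + (w t x i - u t x i) • (sA.comp (ContinuousLinearMap.inr ℝ ℝ (Fin n → ℝ)))) x :=
      hs_slice.mul ((hw_comp i).sub (hu_comp x i))
    have hkey := pd_of_hasFDerivAt hL i
    rw [hmom' i, pd_of_hasFDerivAt hR i] at hkey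
    simp only [ContinuousLinearMap.add_apply, ContinuousLinearMap.sum_apply,
      ContinuousLinearMap.coe_comp', Function.comp_apply, ContinuousLinearMap.smul_apply,
      ContinuousLinearMap.sub_apply, evC_apply, ContinuousLinearMap.inr_apply,
      ContinuousLinearMap.proj_apply, smul_eq_mul] at hkey
    linear_combination -hkey
  -- final assembly
  have hTr : ∑ i, ∑ j, pd j (fun y => u t y i) x * pd i (fun y => u t y j) x
      = ∑ i, ∑ j, Du (t, x) ((0:ℝ), Pi.single j 1) i * Du (t, x) ((0:ℝ), Pi.single i 1) j :=
    Finset.sum_congr rfl fun i _ => Finset.sum_congr rfl fun j _ => by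
      rw [h1 t ht x j i, h1 t ht x i j]
  rw [hC1, hC3, hTr, hdvgx x]
  exact final_algebra n (fun i j => Du (t, x) ((0:ℝ), Pi.single i 1) j)
    (fun a b c => B ((0:ℝ), Pi.single a 1) ((0:ℝ), Pi.single b 1) c)
    (fun i => sA ((0:ℝ), Pi.single i 1)) (fun i => wA ((0:ℝ), Pi.single i 1) i)
    (u t x) (w t x) (fun i => B ((0:ℝ), Pi.single i 1) ((1:ℝ), (0:Fin n → ℝ)) i)
    (s t x) (sA (1, 0))
    (fun a b c => congrFun (hsym ((0:ℝ), Pi.single a 1) ((0:ℝ), Pi.single b 1)) c)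
    hstr' hpd_mom


/-- the law of `e = ∇·u + s` for the pressureless Euler-alignment system with
transported strength: `∂ₜ e + ∇·(u e) = (∇·u)² − Tr((∇u)²)`; in particular when
`(∇·u)² = Tr((∇u)²)` (e.g. `n = 1` or unidirectional flows), `e` satisfies the continuity
equation. -/
theorem euler_alignment_e_law
    (n : ℕ) (T : ℝ) (hT : 0 < T)
    (u : ℝ → (Fin n → ℝ) → Fin n → ℝ)
    (s : ℝ → (Fin n → ℝ) → ℝ)
    (w : ℝ → (Fin n → ℝ) → Fin n → ℝ)
    (hu : ContDiffOn ℝ 2 (fun q : ℝ × (Fin n → ℝ) => u q.1 q.2) (Set.Ico 0 T ×ˢ Set.univ))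
    (hs : ContDiffOn ℝ 1 (fun q : ℝ × (Fin n → ℝ) => s q.1 q.2) (Set.Ico 0 T ×ˢ Set.univ))
    (hw : ContDiffOn ℝ 1 (fun q : ℝ × (Fin n → ℝ) => w q.1 q.2) (Set.Ico 0 T ×ˢ Set.univ))
    (hmom : ∀ t ∈ Set.Ico (0 : ℝ) T, ∀ x,
      derivWithin (fun τ => u τ x) (Set.Ico 0 T) t + fderiv ℝ (u t) x (u t x) =
        s t x • (w t x - u t x))
    (hstr : ∀ t ∈ Set.Ico (0 : ℝ) T, ∀ x,
      derivWithin (fun τ => s τ x) (Set.Ico 0 T) t +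
        dvg (fun y => s t y • w t y) x = 0) :
    (∀ t ∈ Set.Ico (0 : ℝ) T, ∀ x,
      derivWithin (fun τ => dvg (u τ) x + s τ x) (Set.Ico 0 T) t +
          dvg (fun y => (dvg (u t) y + s t y) • u t y) x =
        (dvg (u t) x) ^ 2 -
          ∑ i, ∑ j, pd j (fun y => u t y i) x * pd i (fun y => u t y j) x) ∧
    (∀ t ∈ Set.Ico (0 : ℝ) T, ∀ x,
      (dvg (u t) x) ^ 2 =
          ∑ i, ∑ j, pd j (fun y => u t y i) x * pd i (fun y => u t y j) x →
        derivWithin (fun τ => dvg (u τ) x + s τ x) (Set.Ico 0 T) t +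
          dvg (fun y => (dvg (u t) y + s t y) • u t y) x = 0) := by
  constructor
  · exact fun t ht x => euler_key n T hT u s w hu hs hw hmom hstr t ht x
  · intro t ht x h
    have := euler_key n T hT u s w hu hs hw hmom hstr t ht x
    rw [this, h]
    ring
end
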